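/- arXiv:1704.04080 — 6 statements merged into one kernel-verified Lean document; each statement's English description precedes it below -/
import Mathlib

section
/- If X = ⋃_{i=1}^r X_i is the decomposition of the affine G-variety X into irreducible components, then the subsets H_{σ,i} = {(x, σx) : x ∈ X_i} ⊆ X × X are exactly the irreducible components of the separating variety V_sep, and V_sep is their union. -/
noncomputable section

open TensorProduct PrimeSpectrum

section Defs

variable (K R G : Type*) [Field K] [CommRing R] [Algebra K R] [Group G]

/-- The subalgebra of `G`-invariant regular functions. -/
def invariantsAlg (φ : G →* (R ≃ₐ[K] R)) : Subalgebra K R where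
  carrier := {f | ∀ σ : G, φ σ f = f}
  mul_mem' := fun {a b} ha hb σ => by rw [map_mul, ha σ, hb σ]
  add_mem' := fun {a b} ha hb σ => by rw [map_add, ha σ, hb σ]
  algebraMap_mem' := fun r σ => (φ σ).commutes r

/-- δ(f) = f ⊗ 1 - 1 ⊗ f. -/
def deltaMap (f : R) : R ⊗[K] R := f ⊗ₜ[K] (1 : R) - (1 : R) ⊗ₜ[K] f

def sepIdeal (φ : G →* (R ≃ₐ[K] R)) : Ideal (R ⊗[K] R) :=
  Ideal.span (deltaMap K R '' (invariantsAlg K R G φ : Set R))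

/-- The separating variety, as a closed subset of Spec (K[X] ⊗ K[X]). -/
def sepVariety (φ : G →* (R ≃ₐ[K] R)) : Set (PrimeSpectrum (R ⊗[K] R)) :=
  zeroLocus (sepIdeal K R G φ : Set (R ⊗[K] R))

/-- The ideal I_σ generated by all σ·f - f. -/
def reflIdeal (φ : G →* (R ≃ₐ[K] R)) (σ : G) : Ideal R :=
  Ideal.span (Set.range fun f : R => φ σ f - f)

/-- Codimension of a subset `Z` inside a subset `S` of a prime spectrum:
the infimum of the heights (within `S`) of points of `Z`. -/
def codimIn {A : Type*} [CommRing A] (S Z : Set (PrimeSpectrum A)) : ℕ∞ :=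
  ⨅ p : {q : S // (q : PrimeSpectrum A) ∈ Z}, Order.height (p : S)

/-- σ is a k-reflection: its fixed subvariety has codimension at most k. -/
def IsKReflection (φ : G →* (R ≃ₐ[K] R)) (k : ℕ∞) (σ : G) : Prop :=
  codimIn (Set.univ) (zeroLocus (reflIdeal K R G φ σ : Set R)) ≤ k

/-- A subset `S` of a prime spectrum is connected in codimension `k`. -/
def ConnectedInCodim {A : Type*} [CommRing A] (S : Set (PrimeSpectrum A)) (k : ℕ∞) : Prop :=
  ∀ Z : Set (PrimeSpectrum A), (∃ C, IsClosed C ∧ Z = S ∩ C) → k < codimIn S Z →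
    IsConnected (S \ Z)

/-- A separating set of invariants. -/
def IsSeparating (φ : G →* (R ≃ₐ[K] R)) (S : Set R) : Prop :=
  S ⊆ (invariantsAlg K R G φ : Set R) ∧
  ∀ x y : R →ₐ[K] K, (∃ f ∈ invariantsAlg K R G φ, x f ≠ y f) → ∃ g ∈ S, x g ≠ y g

/-- The minimal size of a separating set of invariants. -/
def gammaSep (φ : G →* (R ≃ₐ[K] R)) : ℕ∞ :=
  ⨅ S ∈ {S : Set R | IsSeparating K R G φ S}, S.encard

/-- σ has a fixed (geometric) point. -/
def HasFixedPoint (φ : G →* (R ≃ₐ[K] R)) (σ : G) : Prop :=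
  ∃ x : R →ₐ[K] K, ∀ f : R, x (φ σ f) = x f

/-- The component H_{σ,i} = {(x, σ x) : x ∈ X_i} of the separating variety,
for a (minimal) prime p of K[X]. -/
def graphComp (φ : G →* (R ≃ₐ[K] R)) (σ : G) (p : Ideal R) :
    Set (PrimeSpectrum (R ⊗[K] R)) :=
  zeroLocus ((Ideal.comap
    (Algebra.TensorProduct.productMap (AlgHom.id K R) (φ σ⁻¹).toAlgHom) p : Ideal (R ⊗[K] R)) :
      Set (R ⊗[K] R))

/-- The depth of a Noetherian local ring: supremum of lengths of regular sequences
in the maximal ideal. -/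
def localDepth (A : Type*) [CommRing A] [IsLocalRing A] : ℕ∞ :=
  sSup {n : ℕ∞ | ∃ rs : List A, (rs.length : ℕ∞) = n ∧
    (∀ r ∈ rs, r ∈ IsLocalRing.maximalIdeal A) ∧ RingTheory.Sequence.IsRegular A rs}

/-- The Cohen-Macaulay defect of `A` is at most `k`. -/
def cmdefLE (A : Type*) [CommRing A] (k : ℕ∞) : Prop :=
  ∀ p : PrimeSpectrum A, ringKrullDim (Localization.AtPrime p.asIdeal) ≤
    ((localDepth (Localization.AtPrime p.asIdeal) + k : ℕ∞) : WithBot ℕ∞)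

/-- The height of an ideal. -/
def idealHeight {A : Type*} [CommRing A] (I : Ideal A) : ℕ∞ :=
  ⨅ p : {q : PrimeSpectrum A // I ≤ q.asIdeal}, Order.height (p : PrimeSpectrum A)




section Aux

variable {K R G}
variable (φ : G →* (R ≃ₐ[K] R))

def muMap (φ : G →* (R ≃ₐ[K] R)) (σ : G) : R ⊗[K] R →ₐ[K] R :=
  Algebra.TensorProduct.productMap (AlgHom.id K R) (φ σ⁻¹).toAlgHom

variable (φ : G →* (R ≃ₐ[K] R))

lemma muMap_tmul (σ : G) (a b : R) : muMap φ σ (a ⊗ₜ[K] b) = a * φ σ⁻¹ b := rfl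

lemma muMap_surjective (σ : G) : Function.Surjective (muMap φ σ) := fun r =>
  ⟨r ⊗ₜ 1, by simp [muMap_tmul]⟩

lemma sub_tmul_mem (σ : G) (P : Ideal (R ⊗[K] R))
    (h : ∀ f : R, f ⊗ₜ[K] (1 : R) - (1 : R) ⊗ₜ[K] (φ σ f) ∈ P) (x : R ⊗[K] R) :
    x - (muMap φ σ x) ⊗ₜ[K] (1 : R) ∈ P := by
  induction x using TensorProduct.induction_on with
  | zero => simp
  | tmul a b =>
    have key := h (φ σ⁻¹ b)
    have hb : φ σ (φ σ⁻¹ b) = b := by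
      rw [← AlgEquiv.mul_apply, ← map_mul, mul_inv_cancel, map_one, AlgEquiv.one_apply]
    rw [hb] at key
    have heq : a ⊗ₜ[K] b - (muMap φ σ (a ⊗ₜ[K] b)) ⊗ₜ[K] (1 : R) =
        -((a ⊗ₜ[K] (1 : R)) * ((φ σ⁻¹ b) ⊗ₜ[K] (1 : R) - (1 : R) ⊗ₜ[K] b)) := by
      rw [muMap_tmul, mul_sub, Algebra.TensorProduct.tmul_mul_tmul,
        Algebra.TensorProduct.tmul_mul_tmul, mul_one, one_mul, neg_sub, mul_one]
    rw [heq]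
    exact P.neg_mem (P.mul_mem_left _ key)
  | add x y hx hy =>
    have := P.add_mem hx hy
    rw [map_add, add_tmul] at *
    simpa [sub_add_sub_comm] using this

def sepIdeal' (φ : G →* (R ≃ₐ[K] R)) : Ideal (R ⊗[K] R) :=
  Ideal.span ((fun f : R => f ⊗ₜ[K] (1:R) - (1:R) ⊗ₜ[K] f) '' (invariantsAlg K R G φ : Set R))

lemma prod_delta_mem [Fintype G] (f : R) :
    (∏ σ : G, (f ⊗ₜ[K] (1 : R) - (1 : R) ⊗ₜ[K] (φ σ f))) ∈ sepIdeal K R G φ := by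
  set J := sepIdeal K R G φ with hJ
  let mk : R ⊗[K] R →+* (R ⊗[K] R) ⧸ J := Ideal.Quotient.mk J
  let α : R →+* (R ⊗[K] R) ⧸ J :=
    mk.comp (Algebra.TensorProduct.includeLeft : R →ₐ[K] R ⊗[K] R).toRingHom
  let β : R →+* (R ⊗[K] R) ⧸ J :=
    mk.comp (Algebra.TensorProduct.includeRight : R →ₐ[K] R ⊗[K] R).toRingHom
  have hmk : ∀ c : R, ∀ d : R, mk (c ⊗ₜ[K] (1:R) - (1:R) ⊗ₜ[K] d) = α c - β d := by
    intro c d; simp [mk, α, β, map_sub]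
  have hαβ : ∀ c ∈ invariantsAlg K R G φ, α c = β c := by
    intro c hc
    have h1 : c ⊗ₜ[K] (1:R) - (1:R) ⊗ₜ[K] c ∈ J := Ideal.subset_span ⟨c, hc, rfl⟩
    have h0 : mk (c ⊗ₜ[K] (1:R) - (1:R) ⊗ₜ[K] c) = 0 := Ideal.Quotient.eq_zero_iff_mem.2 h1
    rw [hmk] at h0
    exact sub_eq_zero.1 h0
  let p : Polynomial R := ∏ σ : G, (Polynomial.X - Polynomial.C (φ σ f))
  have hcoeff : ∀ n, p.coeff n ∈ invariantsAlg K R G φ := by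
    intro n τ
    have hmap : p.map (φ τ).toAlgHom.toRingHom = p := by
      rw [Polynomial.map_prod]
      simp only [Polynomial.map_sub, Polynomial.map_X, Polynomial.map_C]
      calc ∏ x : G, (Polynomial.X - Polynomial.C ((φ τ).toAlgHom.toRingHom ((φ x) f)))
          = ∏ x : G, (Polynomial.X - Polynomial.C ((φ (τ * x)) f)) :=
            Finset.prod_congr rfl fun σ _ => by rw [map_mul, AlgEquiv.mul_apply]; rfl
        _ = p := Equiv.prod_comp (Equiv.mulLeft τ) (fun σ => Polynomial.X - Polynomial.C (φ σ f))
    conv_rhs => rw [← hmap]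
    rw [Polynomial.coeff_map]
    rfl
  have h1 : Polynomial.eval₂ α (α f) p = 0 := by
    rw [show Polynomial.eval₂ α (α f) p = Polynomial.eval₂RingHom α (α f) p from rfl, map_prod]
    have : ∀ σ : G, Polynomial.eval₂RingHom α (α f) (Polynomial.X - Polynomial.C (φ σ f)) =
        α (f - φ σ f) := by
      intro σ; simp [map_sub, Polynomial.eval₂_X, Polynomial.eval₂_C]
    rw [Finset.prod_congr rfl fun σ _ => this σ, ← map_prod]
    have : (∏ σ : G, (f - φ σ f)) = 0 :=
      Finset.prod_eq_zero (Finset.mem_univ (1 : G)) (by simp)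
    rw [this, map_zero]
  have h2 : Polynomial.eval₂ β (α f) p = Polynomial.eval₂ α (α f) p := by
    rw [Polynomial.eval₂_eq_sum_range, Polynomial.eval₂_eq_sum_range]
    exact Finset.sum_congr rfl fun n _ => by rw [hαβ _ (hcoeff n)]
  have h3 : mk (∏ σ : G, (f ⊗ₜ[K] (1 : R) - (1 : R) ⊗ₜ[K] (φ σ f))) =
      Polynomial.eval₂ β (α f) p := by
    rw [map_prod, show Polynomial.eval₂ β (α f) p = Polynomial.eval₂RingHom β (α f) p from rfl,
      map_prod]
    refine Finset.prod_congr rfl fun σ _ => ?_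
    rw [hmk]
    simp [map_sub, Polynomial.eval₂_X, Polynomial.eval₂_C]
  have := h3.trans (h2.trans h1)
  exact Ideal.Quotient.eq_zero_iff_mem.1 this

lemma exists_all_delta_mem [Finite G] [Infinite K] (P : PrimeSpectrum (R ⊗[K] R))
    (hP : (sepIdeal K R G φ : Set (R ⊗[K] R)) ⊆ P.asIdeal) :
    ∃ σ : G, ∀ f : R, f ⊗ₜ[K] (1 : R) - (1 : R) ⊗ₜ[K] (φ σ f) ∈ P.asIdeal := by
  have := Fintype.ofFinite G
  let L : G → (R →ₗ[K] R ⊗[K] R) := fun σ =>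
    { toFun := fun f => f ⊗ₜ[K] (1 : R) - (1 : R) ⊗ₜ[K] (φ σ f)
      map_add' := fun x y => by
        simp only [add_tmul, tmul_add, map_add]
        abel
      map_smul' := fun c x => by
        simp only [map_smul, smul_tmul', tmul_smul, RingHom.id_apply, smul_sub] }
  let V : G → Subspace K R := fun σ => (P.asIdeal.restrictScalars K).comap (L σ)
  have hcover : ⋃ σ, (V σ : Set R) = Set.univ := by
    refine Set.eq_univ_of_forall fun f => ?_
    have hprod : (∏ σ : G, (f ⊗ₜ[K] (1 : R) - (1 : R) ⊗ₜ[K] (φ σ f))) ∈ P.asIdeal :=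
      hP (prod_delta_mem φ f)
    have : ∃ σ ∈ Finset.univ, (f ⊗ₜ[K] (1 : R) - (1 : R) ⊗ₜ[K] (φ σ f)) ∈ P.asIdeal := by
      classical
      by_contra hc
      push_neg at hc
      exact (Finset.prod_induction _ (· ∉ P.asIdeal)
        (fun a b ha hb hab => (P.isPrime.mem_or_mem hab).elim ha hb)
        (fun h1 => P.isPrime.ne_top (Ideal.eq_top_of_isUnit_mem _ h1 isUnit_one))
        (fun σ _ => hc σ (Finset.mem_univ σ))) hprod
    obtain ⟨σ, _, hσ⟩ := this
    exact Set.mem_iUnion.2 ⟨σ, hσ⟩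
  obtain ⟨σ, hσ⟩ := Subspace.exists_eq_top_of_iUnion_eq_univ hcover
  refine ⟨σ, fun f => ?_⟩
  have : f ∈ V σ := hσ ▸ Submodule.mem_top
  exact this

lemma comap_comap' {A B C : Type*} [CommRing A] [CommRing B] [CommRing C]
    [Algebra K A] [Algebra K B] [Algebra K C] (f : A →ₐ[K] B) (g : B →ₐ[K] C) (I : Ideal C) :
    Ideal.comap f (Ideal.comap g I) = Ideal.comap (g.comp f) I := by
  ext x; simp [Ideal.mem_comap]

lemma comap_mu_eq_of_le [Finite G] (σ σ' : G) (p : Ideal R)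
    (hle : Ideal.comap (muMap φ σ') p ≤ Ideal.comap (muMap φ σ) p) :
    Ideal.comap (muMap φ σ') p = Ideal.comap (muMap φ σ) p := by
  have := Fintype.ofFinite G
  set g := σ * σ'⁻¹ with hg
  set Θ : ℕ → (R ⊗[K] R →ₐ[K] R ⊗[K] R) := fun k =>
    Algebra.TensorProduct.map (AlgHom.id K R) (φ (g ^ k)).toAlgHom with hΘ
  have hΘcomp : ∀ j k, (Θ j).comp (Θ k) = Θ (j + k) := by
    intro j k
    apply Algebra.TensorProduct.ext'
    intro a b
    simp only [hΘ, AlgHom.comp_apply, Algebra.TensorProduct.map_tmul, AlgHom.coe_id, id_eq,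
      AlgEquiv.toAlgHom_eq_coe, AlgHom.coe_coe, AlgEquiv.coe_toAlgHom]
    rw [← AlgEquiv.mul_apply, ← map_mul, ← pow_add]
  have hmu : (muMap φ σ).comp (Θ 1) = muMap φ σ' := by
    apply Algebra.TensorProduct.ext'
    intro a b
    simp only [hΘ, AlgHom.comp_apply, Algebra.TensorProduct.map_tmul, AlgHom.coe_id, id_eq,
      AlgEquiv.toAlgHom_eq_coe, AlgHom.coe_coe, muMap_tmul, pow_one, AlgEquiv.coe_toAlgHom]
    rw [← AlgEquiv.mul_apply, ← map_mul, hg, inv_mul_cancel_left]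
  set q := Ideal.comap (muMap φ σ) p with hq
  have hq' : Ideal.comap (muMap φ σ') p = Ideal.comap (Θ 1) q := by
    rw [hq, comap_comap', hmu]
  have hle1 : Ideal.comap (Θ 1) q ≤ q := hq' ▸ hle
  have step : ∀ k, Ideal.comap (Θ (k + 1)) q ≤ Ideal.comap (Θ k) q := by
    intro k
    have h1 : Ideal.comap (Θ k) (Ideal.comap (Θ 1) q) = Ideal.comap (Θ (k + 1)) q := by
      rw [comap_comap' (Θ k) (Θ 1) q, hΘcomp, Nat.add_comm]
    rw [← h1]
    exact Ideal.comap_mono hle1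
  have desc : ∀ k, Ideal.comap (Θ (k + 1)) q ≤ Ideal.comap (Θ 1) q := by
    intro k
    induction k with
    | zero => exact le_refl _
    | succ n ih => exact (step (n + 1)).trans ih
  have hid : Ideal.comap (Θ (Fintype.card G)) q = q := by
    have h1 : g ^ Fintype.card G = 1 := pow_card_eq_one
    have h2 : Θ (Fintype.card G) = AlgHom.id K (R ⊗[K] R) := by
      apply Algebra.TensorProduct.ext'
      intro a b
      simp only [hΘ, h1, map_one, Algebra.TensorProduct.map_tmul, AlgEquiv.toAlgHom_eq_coe,
        AlgHom.coe_coe, AlgEquiv.coe_toAlgHom, AlgEquiv.one_apply, AlgHom.coe_id, id_eq, AlgHom.id_apply]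
    rw [h2]
    ext x
    simp [Ideal.mem_comap]
  obtain ⟨n, hn⟩ : ∃ n, Fintype.card G = n + 1 :=
    ⟨Fintype.card G - 1, (Nat.succ_pred_eq_of_pos Fintype.card_pos).symm⟩
  have hback : q ≤ Ideal.comap (Θ 1) q := by
    conv_lhs => rw [← hid, hn]
    exact desc n
  rw [hq']
  exact le_antisymm hle1 hback



lemma sepIdeal_le_comap (σ : G) (p : Ideal R) :
    sepIdeal K R G φ ≤ Ideal.comap (muMap φ σ) p := by
  rw [sepIdeal, Ideal.span_le]
  rintro _ ⟨f, hf, rfl⟩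
  simp only [SetLike.mem_coe, Ideal.mem_comap, deltaMap]
  rw [map_sub, muMap_tmul, muMap_tmul, map_one, mul_one, one_mul]
  have hinv : φ σ⁻¹ f = f := hf σ⁻¹
  rw [hinv, sub_self]
  exact p.zero_mem

lemma graphComp_eq (σ : G) (p : Ideal R) :
    graphComp K R G φ σ p =
      zeroLocus ((Ideal.comap (muMap φ σ) p : Ideal (R ⊗[K] R)) : Set (R ⊗[K] R)) := rfl

lemma graphComp_subset_sepVariety (σ : G) (p : Ideal R) :
    graphComp K R G φ σ p ⊆ sepVariety K R G φ := by
  rw [graphComp_eq, sepVariety]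
  exact zeroLocus_anti_mono (fun x hx => sepIdeal_le_comap φ σ p hx)

lemma graphComp_isIrreducible (σ : G) (p : Ideal R) [p.IsPrime] :
    IsIrreducible (graphComp K R G φ σ p) := by
  rw [graphComp_eq]
  haveI : (Ideal.comap (muMap φ σ) p).IsPrime := Ideal.IsPrime.comap _
  exact (isIrreducible_zeroLocus_iff_of_radical _
    (Ideal.IsPrime.isRadical inferInstance)).2 inferInstance

lemma graphComp_isClosed (σ : G) (p : Ideal R) : IsClosed (graphComp K R G φ σ p) := by
  rw [graphComp_eq]; exact isClosed_zeroLocus _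

lemma sepVariety_eq_iUnion [Finite G] [Infinite K] :
    sepVariety K R G φ = ⋃ σ : G, ⋃ p ∈ minimalPrimes R, graphComp K R G φ σ p := by
  apply Set.Subset.antisymm
  · intro P hP
    have hP' : (sepIdeal K R G φ : Set (R ⊗[K] R)) ⊆ P.asIdeal := (mem_zeroLocus _ _).1 hP
    obtain ⟨σ, hσ⟩ := exists_all_delta_mem φ P hP'
    set M : R ⊗[K] R →+* R := (muMap φ σ).toRingHom with hM
    have hMapp : ∀ x, M x = muMap φ σ x := fun x => rfl
    have hMsurj : Function.Surjective M := muMap_surjective φ σ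
    have hker : RingHom.ker M ≤ P.asIdeal := by
      intro x hx
      have h2 := sub_tmul_mem φ σ P.asIdeal hσ x
      rw [RingHom.mem_ker, hMapp] at hx
      rw [hx] at h2
      simpa using h2
    haveI hq0 : (P.asIdeal.map M).IsPrime :=
      Ideal.map_isPrime_of_surjective hMsurj hker
    obtain ⟨p, hpmin, hple⟩ :=
      Ideal.exists_minimalPrimes_le (bot_le : (⊥ : Ideal R) ≤ P.asIdeal.map M)
    refine Set.mem_iUnion.2 ⟨σ, Set.mem_iUnion₂.2 ⟨p, hpmin, ?_⟩⟩
    rw [graphComp_eq, mem_zeroLocus]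
    intro x hx
    rw [SetLike.mem_coe, Ideal.mem_comap] at hx
    have h1 : M x ∈ P.asIdeal.map M := hple hx
    have h2 : Ideal.comap M (P.asIdeal.map M) = P.asIdeal := by
      rw [Ideal.comap_map_of_surjective M hMsurj]
      refine sup_eq_left.2 (fun y hy => hker ?_)
      rwa [RingHom.mem_ker, ← Ideal.mem_bot, ← Ideal.mem_comap]
    rw [← h2]
    exact Ideal.mem_comap.2 h1
  · exact Set.iUnion_subset fun σ => Set.iUnion₂_subset fun p hp =>
      graphComp_subset_sepVariety φ σ p

end Aux

section Statements

variable {K R G : Type*} [Field K] [IsAlgClosed K] [CommRing R] [IsReduced R] [Nontrivial R]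
  [Algebra K R] [Group G] [Finite G]

/-- If X = ⋃ᵢ Xᵢ is the decomposition into irreducible components
(corresponding to the minimal primes of K[X]), then the graphs H_{σ,i} = {(x, σx) : x ∈ Xᵢ}
are exactly the irreducible components of the separating variety, and the separating
variety is their union. -/
theorem sepVariety_irreducibleComponents (hfg : Algebra.FiniteType K R)
    (φ : G →* (R ≃ₐ[K] R)) :
    sepVariety K R G φ = (⋃ σ : G, ⋃ p ∈ minimalPrimes R, graphComp K R G φ σ p) ∧
    ∀ Z : Set (PrimeSpectrum (R ⊗[K] R)),
      (IsIrreducible Z ∧ Z ⊆ sepVariety K R G φ ∧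
        ∀ W, IsIrreducible W → W ⊆ sepVariety K R G φ → Z ⊆ W → W = Z) ↔
      ∃ σ : G, ∃ p ∈ minimalPrimes R, Z = graphComp K R G φ σ p := by
  have hpart1 : sepVariety K R G φ = ⋃ σ : G, ⋃ p ∈ minimalPrimes R, graphComp K R G φ σ p :=
    sepVariety_eq_iUnion φ
  refine ⟨hpart1, fun Z => ⟨?_, ?_⟩⟩
  · rintro ⟨hirr, hsub, hmax⟩
    obtain ⟨x, hx⟩ := QuasiSober.sober hirr.closure isClosed_closure
    have hxV : x ∈ sepVariety K R G φ := closure_minimal hsub (isClosed_zeroLocus _) hx.mem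
    rw [hpart1] at hxV
    obtain ⟨σ, hσ⟩ := Set.mem_iUnion.1 hxV
    obtain ⟨p, hp, hxg⟩ := Set.mem_iUnion₂.1 hσ
    haveI : p.IsPrime := hp.1.1
    have hZg : Z ⊆ graphComp K R G φ σ p := by
      refine subset_closure.trans ?_
      rw [← hx.def]
      exact closure_minimal (Set.singleton_subset_iff.2 hxg) (graphComp_isClosed φ σ p)
    exact ⟨σ, p, hp, (hmax _ (graphComp_isIrreducible φ σ p)
      (graphComp_subset_sepVariety φ σ p) hZg).symm⟩
  · rintro ⟨σ, p, hp, rfl⟩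
    haveI : p.IsPrime := hp.1.1
    refine ⟨graphComp_isIrreducible φ σ p, graphComp_subset_sepVariety φ σ p, ?_⟩
    intro W hW hWsub hZW
    obtain ⟨x, hx⟩ := QuasiSober.sober hW.closure isClosed_closure
    have hxV : x ∈ sepVariety K R G φ := closure_minimal hWsub (isClosed_zeroLocus _) hx.mem
    rw [hpart1] at hxV
    obtain ⟨σ', hσ'⟩ := Set.mem_iUnion.1 hxV
    obtain ⟨p', hp', hxg⟩ := Set.mem_iUnion₂.1 hσ'
    haveI hp'prime : p'.IsPrime := hp'.1.1
    have hWg : W ⊆ graphComp K R G φ σ' p' := by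
      refine subset_closure.trans ?_
      rw [← hx.def]
      exact closure_minimal (Set.singleton_subset_iff.2 hxg) (graphComp_isClosed φ σ' p')
    haveI : (Ideal.comap (muMap φ σ) p).IsPrime := Ideal.IsPrime.comap _
    have hmemq : (⟨Ideal.comap (muMap φ σ) p, inferInstance⟩ : PrimeSpectrum (R ⊗[K] R)) ∈
        graphComp K R G φ σ p := by
      rw [graphComp_eq]
      exact (mem_zeroLocus _ _).2 (fun _ h => h)
    have hq'q : Ideal.comap (muMap φ σ') p' ≤ Ideal.comap (muMap φ σ) p := by
      have h1 := hWg (hZW hmemq)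
      rw [graphComp_eq] at h1
      exact (mem_zeroLocus _ _).1 h1
    have hp'p : p' ≤ p := by
      intro a ha
      have h1 : a ⊗ₜ[K] (1 : R) ∈ Ideal.comap (muMap φ σ') p' := by
        rw [Ideal.mem_comap, muMap_tmul, map_one, mul_one]
        exact ha
      have h2 := hq'q h1
      rw [Ideal.mem_comap, muMap_tmul, map_one, mul_one] at h2
      exact h2
    have hpp' : p' = p := le_antisymm hp'p (hp.2 ⟨hp'prime, bot_le⟩ hp'p)
    subst hpp'
    have hq : Ideal.comap (muMap φ σ') p' = Ideal.comap (muMap φ σ) p' :=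
      comap_mu_eq_of_le φ σ σ' p' hq'q
    have hgg : graphComp K R G φ σ' p' = graphComp K R G φ σ p' := by
      rw [graphComp_eq, graphComp_eq, hq]
    exact Set.Subset.antisymm (hgg ▸ hWg) hZW


end Statements
end Defs
end
end

section
/- The separating variety V_sep is connected if and only if X is connected and G is generated by elements having a fixed point in X. -/
noncomputable section

open TensorProduct PrimeSpectrum

section Defs

variable (K R G : Type*) [Field K] [CommRing R] [Algebra K R] [Group G]

section Helpers

open Algebra.TensorProduct

variable {K R G : Type*} [Field K] [CommRing R] [Algebra K R] [Group G]

/-- The twisted multiplication map whose kernel cuts out the graph of `σ`. -/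
def grMap (φ : G →* (R ≃ₐ[K] R)) (σ : G) : R ⊗[K] R →ₐ[K] R :=
  Algebra.TensorProduct.productMap (AlgHom.id K R) (φ σ⁻¹).toAlgHom

lemma grMap_tmul (φ : G →* (R ≃ₐ[K] R)) (σ : G) (a b : R) :
    grMap φ σ (a ⊗ₜ[K] b) = a * φ σ⁻¹ b := rfl

lemma grMap_surjective (φ : G →* (R ≃ₐ[K] R)) (σ : G) :
    Function.Surjective (grMap φ σ) := fun r =>
  ⟨r ⊗ₜ[K] 1, by simp [grMap_tmul]⟩

/-- The ideal of the graph of `σ`. -/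
def grIdeal (φ : G →* (R ≃ₐ[K] R)) (σ : G) : Ideal (R ⊗[K] R) :=
  RingHom.ker ((grMap φ σ : R ⊗[K] R →ₐ[K] R) : R ⊗[K] R →+* R)

/-- The graph of `σ` as a closed subset of `Spec (R ⊗ R)`. -/
def grSet (φ : G →* (R ≃ₐ[K] R)) (σ : G) : Set (PrimeSpectrum (R ⊗[K] R)) :=
  zeroLocus (grIdeal φ σ : Set (R ⊗[K] R))

lemma sepIdeal_le_grIdeal (φ : G →* (R ≃ₐ[K] R)) (σ : G) :
    sepIdeal K R G φ ≤ grIdeal φ σ := by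
  rw [sepIdeal, Ideal.span_le]
  rintro _ ⟨f, hf, rfl⟩
  have hinv : φ σ⁻¹ f = f := hf σ⁻¹
  simp only [SetLike.mem_coe, grIdeal, RingHom.mem_ker, RingHom.coe_coe, deltaMap, map_sub,
    grMap_tmul, map_one, mul_one, one_mul, hinv, sub_self]

lemma grSet_subset_sepVariety (φ : G →* (R ≃ₐ[K] R)) (σ : G) :
    grSet φ σ ⊆ sepVariety K R G φ :=
  zeroLocus_anti_mono (fun x hx => sepIdeal_le_grIdeal φ σ hx)

lemma isClosed_grSet (φ : G →* (R ≃ₐ[K] R)) (σ : G) : IsClosed (grSet φ σ) :=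
  isClosed_zeroLocus _

lemma grSet_eq_range (φ : G →* (R ≃ₐ[K] R)) (σ : G) :
    grSet φ σ = Set.range (comap ((grMap φ σ : R ⊗[K] R →ₐ[K] R) : R ⊗[K] R →+* R)) :=
  (range_comap_of_surjective _ _ (grMap_surjective φ σ)).symm


lemma finiteType_tensor (hfg : Algebra.FiniteType K R) :
    Algebra.FiniteType K (R ⊗[K] R) := by
  classical
  obtain ⟨s, hs⟩ := hfg.out
  refine ⟨⟨s.image (Algebra.TensorProduct.includeLeft : R →ₐ[K] R ⊗[K] R) ∪
    s.image (Algebra.TensorProduct.includeRight : R →ₐ[K] R ⊗[K] R), ?_⟩⟩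
  set X : Set (R ⊗[K] R) :=
    ((Algebra.TensorProduct.includeLeft : R →ₐ[K] R ⊗[K] R) '' s) ∪
      ((Algebra.TensorProduct.includeRight : R →ₐ[K] R ⊗[K] R) '' s) with hX
  have hcoe : ((s.image (Algebra.TensorProduct.includeLeft : R →ₐ[K] R ⊗[K] R) ∪
      s.image (Algebra.TensorProduct.includeRight : R →ₐ[K] R ⊗[K] R) : Finset (R ⊗[K] R)) :
        Set (R ⊗[K] R)) = X := by
    simp [hX]
  rw [hcoe, eq_top_iff, ← Algebra.TensorProduct.adjoin_tmul_eq_top (R := K) (A := R) (B := R)]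
  apply Algebra.adjoin_le
  rintro _ ⟨a, b, rfl⟩
  have hmem : ∀ (f : R →ₐ[K] R ⊗[K] R) (c : R), (f '' s) ⊆ X →
      f c ∈ Algebra.adjoin K X := by
    intro f c hsub
    have hc : c ∈ Algebra.adjoin K (s : Set R) := hs ▸ Algebra.mem_top
    have : f c ∈ Algebra.adjoin K (f '' s) := by
      rw [Algebra.adjoin_image]
      exact ⟨c, hc, rfl⟩
    exact Algebra.adjoin_mono hsub this
  have ha : (a ⊗ₜ[K] (1 : R)) ∈ Algebra.adjoin K X :=
    hmem Algebra.TensorProduct.includeLeft a Set.subset_union_left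
  have hb : ((1 : R) ⊗ₜ[K] b) ∈ Algebra.adjoin K X :=
    hmem Algebra.TensorProduct.includeRight b Set.subset_union_right
  have : a ⊗ₜ[K] b = (a ⊗ₜ[K] (1 : R)) * ((1 : R) ⊗ₜ[K] b) := by
    rw [Algebra.TensorProduct.tmul_mul_tmul, mul_one, one_mul]
  rw [this]
  exact mul_mem ha hb

lemma exists_algHom_of_isMaximal [IsAlgClosed K] {T : Type*} [CommRing T] [Algebra K T]
    (hft : Algebra.FiniteType K T) {m : Ideal T} (hm : m.IsMaximal) :
    ∃ π : T →ₐ[K] K, RingHom.ker π = m := by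
  haveI : m.IsPrime := hm.isPrime
  haveI hft' : Algebra.FiniteType K (T ⧸ m) :=
    hft.of_surjective (Ideal.Quotient.mkₐ K m) Ideal.Quotient.mk_surjective
  haveI : Module.Finite K (T ⧸ m) :=
    @finite_of_finite_type_of_isJacobsonRing K (T ⧸ m) _ (Ideal.Quotient.field m) _ _ hft'
  haveI : Algebra.IsIntegral K (T ⧸ m) := Algebra.IsIntegral.of_finite K (T ⧸ m)
  have hsurj : Function.Surjective (algebraMap K (T ⧸ m)) :=
    IsAlgClosed.algebraMap_bijective_of_isIntegral.2
  have hinj : Function.Injective (algebraMap K (T ⧸ m)) := (algebraMap K (T ⧸ m)).injective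
  let e : K ≃+* (T ⧸ m) := RingEquiv.ofBijective (algebraMap K (T ⧸ m)) ⟨hinj, hsurj⟩
  refine ⟨{ toRingHom := (e.symm : (T ⧸ m) →+* K).comp (Ideal.Quotient.mk m), commutes' := ?_ }, ?_⟩
  · intro c
    show e.symm ((Ideal.Quotient.mk m) (algebraMap K T c)) = algebraMap K K c
    have h1 : (Ideal.Quotient.mk m) (algebraMap K T c) = e c := by
      rw [Ideal.Quotient.mk_algebraMap]; rfl
    rw [h1, RingEquiv.symm_apply_apply]
    rfl
  · ext w
    simp only [RingHom.mem_ker, AlgHom.coe_mk, RingHom.coe_comp, Function.comp_apply]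
    constructor
    · intro h
      have h2 : e (e.symm ((Ideal.Quotient.mk m) w)) = 0 := by
        rw [show e.symm ((Ideal.Quotient.mk m) w) = (0 : K) from h, map_zero]
      rw [RingEquiv.apply_symm_apply] at h2
      exact Ideal.Quotient.eq_zero_iff_mem.mp h2
    · intro h
      rw [Ideal.Quotient.eq_zero_iff_mem.mpr h, map_zero]

lemma algHom_eq_of_ker_le {u v : R →ₐ[K] K} (h : RingHom.ker u ≤ RingHom.ker v) : u = v := by
  ext f
  have h1 : f - algebraMap K R (u f) ∈ RingHom.ker u := by
    simp [RingHom.mem_ker, map_sub, AlgHom.commutes]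
  have h2 := h h1
  rw [RingHom.mem_ker, map_sub, sub_eq_zero, AlgHom.commutes] at h2
  · exact h2.symm


lemma mem_invariantsAlg {φ : G →* (R ≃ₐ[K] R)} {f : R} (h : ∀ σ : G, φ σ f = f) :
    f ∈ invariantsAlg K R G φ := h

lemma separation [Finite G] (φ : G →* (R ≃ₐ[K] R)) (x y : R →ₐ[K] K)
    (h : ∀ f ∈ invariantsAlg K R G φ, x f = y f) :
    ∃ σ : G, ∀ f, y f = x (φ σ f) := by
  haveI := Fintype.ofFinite G
  classical
  by_contra hc
  push_neg at hc
  -- hc : ∀ σ, ∃ f, y f ≠ x (φ σ f)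
  set u : G → (R →ₐ[K] K) := fun σ => x.comp (φ σ).toAlgHom with hu
  set v : G → (R →ₐ[K] K) := fun τ => y.comp (φ τ).toAlgHom with hv
  have hune : ∀ σ τ : G, v τ ≠ u σ := by
    intro σ τ heq
    obtain ⟨f, hf⟩ := hc (σ * τ⁻¹)
    apply hf
    have := congrArg (fun (w : R →ₐ[K] K) => w (φ τ⁻¹ f)) heq
    simp only [hv, hu, AlgHom.comp_apply, AlgEquiv.toAlgHom_eq_coe, AlgHom.coe_coe] at this
    calc y f = y (φ τ (φ τ⁻¹ f)) := by
                rw [← AlgEquiv.mul_apply, ← map_mul, mul_inv_cancel, map_one, AlgEquiv.one_apply]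
      _ = x (φ σ (φ τ⁻¹ f)) := this
      _ = x (φ (σ * τ⁻¹) f) := by rw [map_mul, AlgEquiv.mul_apply]
  have hprime : ∀ τ : G, (RingHom.ker (v τ)).IsPrime := fun τ => RingHom.ker_isPrime _
  have hnotsub :
      ¬ ((Finset.univ.inf fun σ => RingHom.ker (u σ) : Ideal R) : Set R) ⊆
        ⋃ τ ∈ (((Finset.univ : Finset G) : Set G)), ((RingHom.ker (v τ) : Ideal R) : Set R) := by
    intro hsub
    rw [Ideal.subset_union_prime 1 1 (fun τ _ _ _ => hprime τ)] at hsub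
    obtain ⟨τ, -, hle⟩ := hsub
    rw [Ideal.IsPrime.inf_le' (hprime τ)] at hle
    obtain ⟨σ, -, hle2⟩ := hle
    exact hune σ τ (algHom_eq_of_ker_le hle2).symm
  obtain ⟨hh, hhI, hhU⟩ := Set.not_subset.mp hnotsub
  have hx0 : ∀ σ : G, x (φ σ hh) = 0 := by
    intro σ
    have hmem : hh ∈ (Finset.univ.inf fun σ => RingHom.ker (u σ) : Ideal R) := hhI
    have hle : (Finset.univ.inf fun σ => RingHom.ker (u σ) : Ideal R) ≤ RingHom.ker (u σ) :=
      Finset.inf_le (Finset.mem_univ σ)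
    have : hh ∈ RingHom.ker (u σ) := hle hmem
    simpa [hu, RingHom.mem_ker] using this
  have hy0 : ∀ τ : G, y (φ τ hh) ≠ 0 := by
    intro τ hτ
    exact hhU (Set.mem_biUnion (Finset.mem_univ τ) (by simpa [hv, RingHom.mem_ker] using hτ))
  set f : R := ∏ σ : G, φ σ hh with hf
  have hfinv : f ∈ invariantsAlg K R G φ := by
    apply mem_invariantsAlg
    intro τ
    rw [hf, map_prod]
    have : ∀ σ : G, φ τ (φ σ hh) = φ (τ * σ) hh := by
      intro σ; rw [map_mul, AlgEquiv.mul_apply]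
    calc ∏ σ : G, φ τ (φ σ hh) = ∏ σ : G, φ (τ * σ) hh := by
          exact Finset.prod_congr rfl fun σ _ => this σ
      _ = ∏ σ : G, φ σ hh :=
          Fintype.prod_equiv (Equiv.mulLeft τ) (fun σ => φ (τ * σ) hh)
            (fun σ => φ σ hh) fun σ => by simp
  have hxf : x f = 0 := by
    rw [hf, map_prod]
    exact Finset.prod_eq_zero (Finset.mem_univ 1) (hx0 1)
  have hyf : y f ≠ 0 := by
    rw [hf, map_prod]
    exact Finset.prod_ne_zero_iff.mpr fun τ _ => hy0 τ
  exact hyf (h f hfinv ▸ hxf ▸ rfl)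


lemma exists_grIdeal_le_of_isMaximal [IsAlgClosed K] [Finite G]
    (hfg : Algebra.FiniteType K R) (φ : G →* (R ≃ₐ[K] R)) {m : Ideal (R ⊗[K] R)}
    (hm : m.IsMaximal) (hIm : sepIdeal K R G φ ≤ m) : ∃ σ : G, grIdeal φ σ ≤ m := by
  obtain ⟨π, hπ⟩ := exists_algHom_of_isMaximal (finiteType_tensor hfg) hm
  set x : R →ₐ[K] K :=
    π.comp (Algebra.TensorProduct.includeLeft : R →ₐ[K] R ⊗[K] R) with hx
  set y : R →ₐ[K] K :=
    π.comp (Algebra.TensorProduct.includeRight : R →ₐ[K] R ⊗[K] R) with hy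
  have hxy : ∀ f ∈ invariantsAlg K R G φ, x f = y f := by
    intro f hf
    have hδ : deltaMap K R f ∈ m := hIm (Ideal.subset_span ⟨f, hf, rfl⟩)
    rw [← hπ, RingHom.mem_ker] at hδ
    have h0 : π (f ⊗ₜ[K] (1 : R)) - π ((1 : R) ⊗ₜ[K] f) = 0 := by
      simpa [deltaMap, map_sub] using hδ
    exact sub_eq_zero.mp h0
  obtain ⟨σ, hσ⟩ := separation φ x y hxy
  refine ⟨σ⁻¹, ?_⟩
  have hcomp : x.comp (grMap φ σ⁻¹) = π := by
    apply Algebra.TensorProduct.ext'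
    intro a b
    have h1 : (a ⊗ₜ[K] b : R ⊗[K] R) = (a ⊗ₜ[K] 1) * ((1 : R) ⊗ₜ[K] b) := by
      rw [Algebra.TensorProduct.tmul_mul_tmul, mul_one, one_mul]
    rw [AlgHom.comp_apply, grMap_tmul, inv_inv, map_mul, h1, map_mul]
    have h2 : x (φ σ b) = y b := (hσ b).symm
    rw [h2]; rfl
  intro w hw
  rw [← hπ, RingHom.mem_ker, ← hcomp, AlgHom.comp_apply]
  rw [grIdeal, RingHom.mem_ker] at hw
  rw [show grMap φ σ⁻¹ w = 0 from hw, map_zero]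

lemma sepVariety_eq_iUnion_s7 [IsAlgClosed K] [Finite G] (hfg : Algebra.FiniteType K R)
    (φ : G →* (R ≃ₐ[K] R)) :
    sepVariety K R G φ = ⋃ σ : G, grSet φ σ := by
  haveI := Fintype.ofFinite G
  classical
  apply Set.Subset.antisymm
  · intro P hP
    have hP' : sepIdeal K R G φ ≤ P.asIdeal := hP
    by_contra hc
    simp only [Set.mem_iUnion] at hc
    push_neg at hc
    have hc' : ∀ σ : G, ∃ a ∈ grIdeal φ σ, a ∉ P.asIdeal := by
      intro σ
      have h1 := hc σ
      rw [grSet, mem_zeroLocus, Set.not_subset] at h1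
      obtain ⟨a, ha1, ha2⟩ := h1
      exact ⟨a, ha1, ha2⟩
    choose a ha hna using hc'
    set b : R ⊗[K] R := ∏ σ : G, a σ with hb
    have hbP : b ∉ P.asIdeal := by
      intro hmem
      obtain ⟨σ, -, hσ⟩ := (Ideal.IsPrime.prod_mem_iff (hp := P.isPrime)).mp hmem
      exact hna σ hσ
    have hbrad : b ∈ (sepIdeal K R G φ).radical := by
      haveI : IsJacobsonRing (R ⊗[K] R) :=
        @isJacobsonRing_of_finiteType K (R ⊗[K] R) _ _ _ _ (finiteType_tensor hfg)
      rw [Ideal.radical_eq_jacobson, Ideal.jacobson, Submodule.mem_sInf]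
      rintro m ⟨hIm, hmax⟩
      obtain ⟨σ, hσ⟩ := exists_grIdeal_le_of_isMaximal hfg φ hmax hIm
      obtain ⟨c, hc2⟩ := Finset.dvd_prod_of_mem a (Finset.mem_univ σ)
      rw [hb, hc2]
      exact Ideal.mul_mem_right _ _ (hσ (ha σ))
    have : b ∈ P.asIdeal := by
      have hrad := Ideal.radical_mono hP'
      rw [Ideal.IsPrime.radical P.isPrime] at hrad
      exact hrad hbrad
    exact hbP this
  · exact Set.iUnion_subset fun σ => grSet_subset_sepVariety φ σ


lemma fixed_inv {φ : G →* (R ≃ₐ[K] R)} {z : R →ₐ[K] K} {s : G}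
    (hz : ∀ f, z (φ s f) = z f) : ∀ f, z (φ s⁻¹ f) = z f := by
  intro f
  conv_rhs => rw [show f = φ s (φ s⁻¹ f) by
    rw [← AlgEquiv.mul_apply, ← map_mul, mul_inv_cancel, map_one, AlgEquiv.one_apply]]
  rw [hz]

/-- The closed point of the graph of `σ` over the geometric point `z`. -/
def grPt (φ : G →* (R ≃ₐ[K] R)) (z : R →ₐ[K] K) (σ : G) : PrimeSpectrum (R ⊗[K] R) :=
  ⟨RingHom.ker ((z.comp (grMap φ σ) : R ⊗[K] R →ₐ[K] K) : R ⊗[K] R →+* K),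
    RingHom.ker_isPrime _⟩

lemma grPt_mem (φ : G →* (R ≃ₐ[K] R)) (z : R →ₐ[K] K) (σ : G) :
    grPt φ z σ ∈ grSet φ σ := by
  rw [grSet, mem_zeroLocus]
  intro w hw
  have hw' : grMap φ σ w = 0 := hw
  show w ∈ RingHom.ker _
  rw [RingHom.mem_ker]
  show z (grMap φ σ w) = 0
  rw [hw', map_zero]

lemma grPt_mul (φ : G →* (R ≃ₐ[K] R)) (z : R →ₐ[K] K) (s : G)
    (hz : ∀ f, z (φ s f) = z f) (x : G) : grPt φ z (x * s) = grPt φ z x := by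
  have hcomp : z.comp (grMap φ (x * s)) = z.comp (grMap φ x) := by
    apply Algebra.TensorProduct.ext'
    intro a b
    simp only [AlgHom.comp_apply, grMap_tmul, map_mul]
    congr 1
    have h1 : φ (x * s)⁻¹ b = φ s⁻¹ (φ x⁻¹ b) := by
      rw [mul_inv_rev, map_mul, AlgEquiv.mul_apply]
    rw [h1, fixed_inv hz]
  have : RingHom.ker ((z.comp (grMap φ (x * s)) : R ⊗[K] R →ₐ[K] K) : R ⊗[K] R →+* K) =
      RingHom.ker ((z.comp (grMap φ x) : R ⊗[K] R →ₐ[K] K) : R ⊗[K] R →+* K) := by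
    rw [hcomp]
  exact PrimeSpectrum.ext this

lemma hasFixedPoint_of_mem_inter [IsAlgClosed K] (hfg : Algebra.FiniteType K R)
    (φ : G →* (R ≃ₐ[K] R)) {σ τ : G} {P : PrimeSpectrum (R ⊗[K] R)}
    (hσ : P ∈ grSet φ σ) (hτ : P ∈ grSet φ τ) : HasFixedPoint K R G φ (τ⁻¹ * σ) := by
  obtain ⟨m, hmax, hPm⟩ := P.asIdeal.exists_le_maximal P.isPrime.ne_top
  obtain ⟨π, hπ⟩ := exists_algHom_of_isMaximal (finiteType_tensor hfg) hmax
  set x : R →ₐ[K] K :=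
    π.comp (Algebra.TensorProduct.includeLeft : R →ₐ[K] R ⊗[K] R) with hx
  have key : ∀ ρ : G, P ∈ grSet φ ρ → ∀ b : R,
      π ((1 : R) ⊗ₜ[K] b) = x (φ ρ⁻¹ b) := by
    intro ρ hρ b
    have helt : ((1 : R) ⊗ₜ[K] b - (φ ρ⁻¹ b) ⊗ₜ[K] (1 : R)) ∈ grIdeal φ ρ := by
      rw [grIdeal, RingHom.mem_ker]
      simp [map_sub, grMap_tmul]
    have hm : ((1 : R) ⊗ₜ[K] b - (φ ρ⁻¹ b) ⊗ₜ[K] (1 : R)) ∈ m := hPm (hρ helt)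
    rw [← hπ, RingHom.mem_ker, map_sub, sub_eq_zero] at hm
    exact hm
  have hkey : ∀ b, x (φ σ⁻¹ b) = x (φ τ⁻¹ b) := fun b =>
    (key σ hσ b).symm.trans (key τ hτ b)
  refine ⟨x, ?_⟩
  intro f
  calc x (φ (τ⁻¹ * σ) f) = x (φ τ⁻¹ (φ σ f)) := by rw [map_mul, AlgEquiv.mul_apply]
    _ = x (φ σ⁻¹ (φ σ f)) := (hkey (φ σ f)).symm
    _ = x f := by
        rw [← AlgEquiv.mul_apply, ← map_mul, inv_mul_cancel, map_one, AlgEquiv.one_apply]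

lemma sepVariety_isConnected [IsAlgClosed K] [Finite G] [Nontrivial R]
    (hfg : Algebra.FiniteType K R) (φ : G →* (R ≃ₐ[K] R))
    (hconn : IsConnected (Set.univ : Set (PrimeSpectrum R)))
    (hgen : Subgroup.closure {σ : G | HasFixedPoint K R G φ σ} = ⊤) :
    IsConnected (sepVariety K R G φ) := by
  obtain ⟨q0⟩ := (inferInstance : Nonempty (PrimeSpectrum R))
  set A := sepVariety K R G φ with hA
  set d0 : PrimeSpectrum (R ⊗[K] R) :=
    comap ((grMap φ (1 : G) : R ⊗[K] R →ₐ[K] R) : R ⊗[K] R →+* R) q0 with hd0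
  have hmemS : ∀ (σ : G) (q : PrimeSpectrum R),
      comap ((grMap φ σ : R ⊗[K] R →ₐ[K] R) : R ⊗[K] R →+* R) q ∈ grSet φ σ := by
    intro σ q; rw [grSet_eq_range]; exact ⟨q, rfl⟩
  have hconnS : ∀ σ : G, IsConnected (grSet φ σ) := by
    intro σ
    rw [grSet_eq_range, ← Set.image_univ]
    exact hconn.image _ (Continuous.continuousOn (continuous_comap _))
  have hsub : ∀ σ, grSet φ σ ⊆ A := fun σ => grSet_subset_sepVariety φ σ
  set comp := connectedComponentIn A d0 with hcomp
  have hd0A : d0 ∈ A := hsub 1 (hmemS 1 q0)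
  have hkey : ∀ σ : G, grSet φ σ ⊆ comp := by
    intro σ
    have hσ : σ ∈ Subgroup.closure {σ : G | HasFixedPoint K R G φ σ} :=
      hgen ▸ Subgroup.mem_top σ
    induction hσ using Subgroup.closure_induction_right with
    | one => exact (hconnS 1).isPreconnected.subset_connectedComponentIn (hmemS 1 q0) (hsub 1)
    | mul_right x hx s hs ih =>
      obtain ⟨y, hy⟩ := hs
      have hpt : grPt φ y (x * s) = grPt φ y x := grPt_mul φ y s hy x
      have hw : grPt φ y (x * s) ∈ comp := by rw [hpt]; exact ih (grPt_mem φ y x)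
      have hsubs := (hconnS (x * s)).isPreconnected.subset_connectedComponentIn
        (grPt_mem φ y (x * s)) (hsub (x * s))
      rwa [hcomp, connectedComponentIn_eq hw]
    | mul_inv_cancel x hx s hs ih =>
      obtain ⟨y, hy⟩ := hs
      have hpt : grPt φ y (x * s⁻¹) = grPt φ y x := grPt_mul φ y s⁻¹ (fixed_inv hy) x
      have hw : grPt φ y (x * s⁻¹) ∈ comp := by rw [hpt]; exact ih (grPt_mem φ y x)
      have hsubs := (hconnS (x * s⁻¹)).isPreconnected.subset_connectedComponentIn
        (grPt_mem φ y (x * s⁻¹)) (hsub (x * s⁻¹))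
      rwa [hcomp, connectedComponentIn_eq hw]
  have hAcomp : A = comp := by
    apply Set.Subset.antisymm
    · rw [show A = ⋃ σ : G, grSet φ σ from sepVariety_eq_iUnion_s7 hfg φ]
      exact Set.iUnion_subset hkey
    · exact connectedComponentIn_subset A d0
  rw [hAcomp]
  exact isConnected_connectedComponentIn_iff.mpr hd0A

end Helpers
section Statements

variable {K R G : Type*} [Field K] [IsAlgClosed K] [CommRing R] [IsReduced R] [Nontrivial R]
  [Algebra K R] [Group G] [Finite G]

/-- The separating variety is connected iff X is connected and G is
generated by elements having a fixed point in X. -/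
theorem sepVariety_connected_iff (hfg : Algebra.FiniteType K R)
    (φ : G →* (R ≃ₐ[K] R)) :
    IsConnected (sepVariety K R G φ) ↔
      (IsConnected (Set.univ : Set (PrimeSpectrum R)) ∧
        Subgroup.closure {σ : G | HasFixedPoint K R G φ σ} = ⊤) := by
  classical
  constructor
  · intro hA
    obtain ⟨q0⟩ := (inferInstance : Nonempty (PrimeSpectrum R))
    have hmemS : ∀ (σ : G) (q : PrimeSpectrum R),
        comap ((grMap φ σ : R ⊗[K] R →ₐ[K] R) : R ⊗[K] R →+* R) q ∈ grSet φ σ := by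
      intro σ q; rw [grSet_eq_range]; exact ⟨q, rfl⟩
    have hsub : ∀ σ : G, grSet φ σ ⊆ sepVariety K R G φ := fun σ =>
      grSet_subset_sepVariety φ σ
    constructor
    · -- `Spec R` is connected
      refine ⟨⟨q0, trivial⟩, ?_⟩
      by_contra hnp
      unfold IsPreconnected at hnp
      push_neg at hnp
      obtain ⟨u, v, hu, hv, hcov, hne1, hne2, hne3⟩ := hnp
      set p1 : C(PrimeSpectrum (R ⊗[K] R), PrimeSpectrum R) :=
        ⟨comap ((Algebra.TensorProduct.includeLeft : R →ₐ[K] R ⊗[K] R) : R →+* R ⊗[K] R),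
          continuous_comap _⟩
        with hp1
      have hmap : ∀ q : PrimeSpectrum R,
          p1 (comap ((grMap φ (1 : G) : R ⊗[K] R →ₐ[K] R) : R ⊗[K] R →+* R) q) = q := by
        intro q
        rw [hp1, ContinuousMap.coe_mk, ← comap_comp_apply]
        have hco : (((grMap φ (1 : G) : R ⊗[K] R →ₐ[K] R) : R ⊗[K] R →+* R)).comp
            ((Algebra.TensorProduct.includeLeft : R →ₐ[K] R ⊗[K] R) : R →+* R ⊗[K] R) =
              RingHom.id R := by
          ext a
          show grMap φ 1 (a ⊗ₜ[K] (1 : R)) = a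
          rw [grMap_tmul]; simp
        rw [hco, comap_id]
      have hres := hA.isPreconnected (p1 ⁻¹' u) (p1 ⁻¹' v)
        (hu.preimage p1.continuous) (hv.preimage p1.continuous) ?_ ?_ ?_
      · obtain ⟨w, hwA, hwu, hwv⟩ := hres
        have hmem : p1 w ∈ Set.univ ∩ (u ∩ v) := ⟨trivial, hwu, hwv⟩
        rw [hne3] at hmem
        exact hmem
      · intro w _
        rcases hcov (Set.mem_univ (p1 w)) with h | h
        · exact Or.inl h
        · exact Or.inr h
      · obtain ⟨q, -, hq⟩ := hne1
        refine ⟨comap ((grMap φ (1 : G) : R ⊗[K] R →ₐ[K] R) : R ⊗[K] R →+* R) q,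
          hsub 1 (hmemS 1 q), ?_⟩
        show p1 _ ∈ u
        rw [hmap q]; exact hq
      · obtain ⟨q, -, hq⟩ := hne2
        refine ⟨comap ((grMap φ (1 : G) : R ⊗[K] R →ₐ[K] R) : R ⊗[K] R →+* R) q,
          hsub 1 (hmemS 1 q), ?_⟩
        show p1 _ ∈ v
        rw [hmap q]; exact hq
    · -- generation by elements with fixed points
      by_contra hne
      set Hc := Subgroup.closure {σ : G | HasFixedPoint K R G φ σ} with hHc
      have hex : ∃ τ : G, τ ∉ Hc := by
        by_contra hall
        push_neg at hall
        exact hne (Subgroup.eq_top_iff' Hc |>.mpr hall)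
      obtain ⟨τ, hτ⟩ := hex
      set B := ⋃ σ ∈ {σ : G | σ ∈ Hc}, grSet φ σ with hB
      set C := ⋃ σ ∈ {σ : G | σ ∉ Hc}, grSet φ σ with hC
      have hclB : IsClosed B :=
        Set.Finite.isClosed_biUnion (Set.toFinite _) fun σ _ => isClosed_grSet φ σ
      have hclC : IsClosed C :=
        Set.Finite.isClosed_biUnion (Set.toFinite _) fun σ _ => isClosed_grSet φ σ
      have hdisj : ∀ P, P ∈ B → P ∈ C → False := by
        intro P hPB hPC
        rw [hB, Set.mem_iUnion₂] at hPB
        rw [hC, Set.mem_iUnion₂] at hPC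
        obtain ⟨σ, hσH, hPσ⟩ := hPB
        obtain ⟨τ', hτ'H, hPτ'⟩ := hPC
        have hfp : HasFixedPoint K R G φ (τ'⁻¹ * σ) :=
          hasFixedPoint_of_mem_inter hfg φ hPσ hPτ'
        have h1 : τ'⁻¹ * σ ∈ Hc := Subgroup.subset_closure hfp
        have h2 : τ'⁻¹ ∈ Hc := by
          have := Subgroup.mul_mem Hc h1 (Subgroup.inv_mem Hc hσH)
          simpa [mul_assoc] using this
        exact hτ'H (by simpa using Subgroup.inv_mem Hc h2)
      have hcover : sepVariety K R G φ ⊆ B ∪ C := by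
        intro P hP
        rw [sepVariety_eq_iUnion_s7 hfg φ, Set.mem_iUnion] at hP
        obtain ⟨σ, hPσ⟩ := hP
        by_cases hσ : σ ∈ Hc
        · exact Or.inl (Set.mem_biUnion hσ hPσ)
        · exact Or.inr (Set.mem_biUnion hσ hPσ)
      obtain ⟨q0⟩ := (inferInstance : Nonempty (PrimeSpectrum R))
      have hres := hA.isPreconnected Cᶜ Bᶜ hclC.isOpen_compl hclB.isOpen_compl ?_ ?_ ?_
      · obtain ⟨w, hwA, hwCc, hwBc⟩ := hres
        rcases hcover hwA with h | h
        · exact hwBc h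
        · exact hwCc h
      · intro P hP
        rcases hcover hP with h | h
        · exact Or.inl fun hc => hdisj P h hc
        · exact Or.inr fun hb => hdisj P hb h
      · refine ⟨comap ((grMap φ (1 : G) : R ⊗[K] R →ₐ[K] R) : R ⊗[K] R →+* R) q0,
          hsub 1 (hmemS 1 q0), ?_⟩
        intro hc
        exact hdisj _ (Set.mem_biUnion (Subgroup.one_mem Hc) (hmemS 1 q0)) hc
      · refine ⟨comap ((grMap φ τ : R ⊗[K] R →ₐ[K] R) : R ⊗[K] R →+* R) q0,
          hsub τ (hmemS τ q0), ?_⟩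
        intro hb
        exact hdisj _ hb (Set.mem_biUnion hτ (hmemS τ q0))
  · rintro ⟨hconn, hgen⟩
    exact sepVariety_isConnected hfg φ hconn hgen

end Statements
end Defs
end
end

section
/- A subset S ⊆ K[X]^G is separating if and only if the radical of the ideal generated by δ(S) in K[X] ⊗_K K[X] equals the radical of the ideal I_sep generated by δ(K[X]^G), where δ(f) = f ⊗ 1 - 1 ⊗ f. -/
noncomputable section

open TensorProduct PrimeSpectrum

section Defs

variable (K R G : Type*) [Field K] [CommRing R] [Algebra K R] [Group G]

section Aux

variable {K A : Type*} [Field K] [IsAlgClosed K] [CommRing A] [Algebra K A]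

lemma mem_radical_iff_forall_algHom (hA : Algebra.FiniteType K A) (I : Ideal A) (a : A) :
    a ∈ I.radical ↔ ∀ ψ : A →ₐ[K] K, (∀ b ∈ I, ψ b = 0) → ψ a = 0 := by
  haveI := hA
  haveI : IsJacobsonRing A := isJacobsonRing_of_finiteType (A := K)
  constructor
  · intro ha ψ hψ
    have hker : I ≤ RingHom.ker ψ.toRingHom := fun b hb => hψ b hb
    have hprime : (RingHom.ker ψ.toRingHom).IsPrime := RingHom.ker_isPrime _
    exact hprime.radical_le_iff.mpr hker ha
  · intro h
    rw [Ideal.radical_eq_jacobson, Ideal.jacobson, Ideal.mem_sInf]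
    rintro J ⟨hIJ, hJmax⟩
    haveI : J.IsMaximal := hJmax
    letI : Field (A ⧸ J) := Ideal.Quotient.field J
    haveI : Algebra.FiniteType K (A ⧸ J) :=
      Algebra.FiniteType.of_surjective (Ideal.Quotient.mkₐ K J)
        (Ideal.Quotient.mkₐ_surjective K J)
    haveI : Module.Finite K (A ⧸ J) := finite_of_finite_type_of_isJacobsonRing K (A ⧸ J)
    haveI : Algebra.IsIntegral K (A ⧸ J) := Algebra.IsIntegral.of_finite K (A ⧸ J)
    have hsurj : Function.Surjective (algebraMap K (A ⧸ J)) :=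
      IsAlgClosed.algebraMap_bijective_of_isIntegral.2
    let e : K ≃+* (A ⧸ J) :=
      RingEquiv.ofBijective (algebraMap K (A ⧸ J)) ⟨(algebraMap K (A ⧸ J)).injective, hsurj⟩
    let ψ : A →ₐ[K] K :=
      { toRingHom := (e.symm : (A ⧸ J) →+* K).comp (Ideal.Quotient.mk J)
        commutes' := fun c => by
          have h1 : Ideal.Quotient.mk J (algebraMap K A c) = algebraMap K (A ⧸ J) c := rfl
          show e.symm (Ideal.Quotient.mk J (algebraMap K A c)) = c
          rw [h1]
          exact e.symm_apply_apply c }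
    have hψJ : ∀ b : A, ψ b = 0 ↔ b ∈ J := by
      intro b
      constructor
      · intro hb
        have hb2 : Ideal.Quotient.mk J b = 0 := by
          have := congrArg e hb
          simpa [ψ, e.apply_symm_apply] using this
        exact (Ideal.Quotient.eq_zero_iff_mem).mp hb2
      · intro hb
        show e.symm (Ideal.Quotient.mk J b) = 0
        rw [Ideal.Quotient.eq_zero_iff_mem.mpr hb, map_zero]
    exact (hψJ a).mp (h ψ fun b hb => (hψJ b).mpr (hIJ hb))

end Aux

section Statements

variable {K R G : Type*} [Field K] [IsAlgClosed K] [CommRing R] [IsReduced R] [Nontrivial R]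
  [Algebra K R] [Group G] [Finite G]

/-- A subset S ⊆ K[X]^G is separating iff the radical of the ideal
generated by δ(S) equals the radical of I_sep = (δ(K[X]^G)). -/
theorem separating_iff_radical_eq (hfg : Algebra.FiniteType K R)
    (φ : G →* (R ≃ₐ[K] R)) (S : Set R) (hS : S ⊆ (invariantsAlg K R G φ : Set R)) :
    (∀ x y : R →ₐ[K] K,
        (∃ f ∈ invariantsAlg K R G φ, x f ≠ y f) → ∃ g ∈ S, x g ≠ y g) ↔
      (Ideal.span (deltaMap K R '' S)).radical = (sepIdeal K R G φ).radical := by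
  classical
  haveI := hfg
  haveI : Algebra.FiniteType R (R ⊗[K] R) := Algebra.FiniteType.baseChange (R := K) (A := R) R
  have hA : Algebra.FiniteType K (R ⊗[K] R) := Algebra.FiniteType.trans hfg inferInstance
  have hdelta : ∀ (ψ : R ⊗[K] R →ₐ[K] K) (g : R),
      ψ (deltaMap K R g) = ψ.comp Algebra.TensorProduct.includeLeft g
        - ψ.comp (Algebra.TensorProduct.includeRight) g := by
    intro ψ g
    simp only [deltaMap, map_sub, AlgHom.comp_apply,
      Algebra.TensorProduct.includeLeft_apply, Algebra.TensorProduct.includeRight_apply]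
  have hsub : Ideal.span (deltaMap K R '' S) ≤ sepIdeal K R G φ :=
    Ideal.span_mono (Set.image_mono hS)
  constructor
  · intro h
    refine le_antisymm (Ideal.radical_mono hsub) ?_
    rw [Ideal.radical_le_radical_iff]
    rw [sepIdeal, Ideal.span_le]
    rintro _ ⟨f, hf, rfl⟩
    rw [SetLike.mem_coe, mem_radical_iff_forall_algHom hA]
    intro ψ hψ
    set x := ψ.comp (Algebra.TensorProduct.includeLeft : R →ₐ[K] R ⊗[K] R) with hx
    set y := ψ.comp (Algebra.TensorProduct.includeRight : R →ₐ[K] R ⊗[K] R) with hy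
    rw [hdelta ψ f]
    by_contra hne
    obtain ⟨g, hgS, hgne⟩ := h x y ⟨f, hf, by
      intro heq
      exact hne (show x f - y f = 0 by rw [heq, sub_self])⟩
    apply hgne
    have : ψ (deltaMap K R g) = 0 :=
      hψ _ (Ideal.subset_span ⟨g, hgS, rfl⟩)
    rw [hdelta ψ g] at this
    exact sub_eq_zero.mp this
  · rintro h x y ⟨f, hf, hxy⟩
    by_contra hc
    push_neg at hc
    set ψ := Algebra.TensorProduct.productMap x y with hψdef
    have hψδ : ∀ g : R, ψ (deltaMap K R g) = x g - y g := by
      intro g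
      simp [ψ, deltaMap, Algebra.TensorProduct.productMap_apply_tmul]
    have hspan : Ideal.span (deltaMap K R '' S) ≤ RingHom.ker ψ.toRingHom := by
      rw [Ideal.span_le]
      rintro _ ⟨g, hgS, rfl⟩
      show ψ (deltaMap K R g) = 0
      rw [hψδ g, hc g hgS, sub_self]
    have hprime : (RingHom.ker ψ.toRingHom).IsPrime := RingHom.ker_isPrime _
    have hrad : (Ideal.span (deltaMap K R '' S)).radical ≤ RingHom.ker ψ.toRingHom :=
      hprime.radical_le_iff.mpr hspan
    have hmem : deltaMap K R f ∈ (sepIdeal K R G φ).radical :=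
      Ideal.le_radical (Ideal.subset_span ⟨f, hf, rfl⟩)
    rw [← h] at hmem
    have : ψ (deltaMap K R f) = 0 := hrad hmem
    rw [hψδ f] at this
    exact hxy (sub_eq_zero.mp this)


end Statements
end Defs
end
end

section
/- Let char(K) ≠ 2, X = V(x₁-x₃, x₂-x₄) ∪ V(x₁+x₃, x₂+x₄) ⊆ K⁴ (two planes meeting at the origin), and let the group G of order 2 act by σ·(x₁,x₂,x₃,x₄) = (x₁,x₂,-x₃,-x₄). Then the invariant ring K[X]^G is the polynomial ring K[x̄₁, x̄₂] in two variables, although the generator of G is not a reflection on X (its fixed space {0} has codimension 2). -/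
noncomputable section

set_option synthInstance.maxHeartbeats 1000000
set_option maxHeartbeats 1000000

open MvPolynomial

variable (K : Type*) [Field K]

/-- The vanishing ideal of the plane {x₁ = x₃, x₂ = x₄} in K⁴. -/
def planeIdeal1 : Ideal (MvPolynomial (Fin 4) K) :=
  Ideal.span {X 0 - X 2, X 1 - X 3}

/-- The vanishing ideal of the plane {x₁ = -x₃, x₂ = -x₄} in K⁴. -/
def planeIdeal2 : Ideal (MvPolynomial (Fin 4) K) :=
  Ideal.span {X 0 + X 2, X 1 + X 3}

/-- The vanishing ideal of X, the union of the two planes. -/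
def twoPlanesIdeal : Ideal (MvPolynomial (Fin 4) K) := planeIdeal1 K ⊓ planeIdeal2 K

/-- The algebra endomorphism (x₁,x₂,x₃,x₄) ↦ (x₁,x₂,-x₃,-x₄) on K[x₁,x₂,x₃,x₄]. -/
def tauMap : MvPolynomial (Fin 4) K →ₐ[K] MvPolynomial (Fin 4) K :=
  MvPolynomial.aeval ![X 0, X 1, -X 2, -X 3]

lemma tauMap_mem : ∀ a ∈ twoPlanesIdeal K, tauMap K a ∈ twoPlanesIdeal K := by
  have h1 : (planeIdeal1 K).map (tauMap K).toRingHom ≤ planeIdeal2 K := by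
    rw [planeIdeal1, Ideal.map_span, Ideal.span_le]
    rintro _ ⟨q, hq, rfl⟩
    rcases hq with rfl | rfl <;>
      · apply Ideal.subset_span
        simp [tauMap, planeIdeal2, sub_neg_eq_add]
  have h2 : (planeIdeal2 K).map (tauMap K).toRingHom ≤ planeIdeal1 K := by
    rw [planeIdeal2, Ideal.map_span, Ideal.span_le]
    rintro _ ⟨q, hq, rfl⟩
    rcases hq with rfl | rfl <;>
      · apply Ideal.subset_span
        simp [tauMap, planeIdeal1, ← sub_eq_add_neg]
  intro a ha
  exact ⟨h2 (Ideal.mem_map_of_mem _ ha.2), h1 (Ideal.mem_map_of_mem _ ha.1)⟩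

/-- The coordinate ring K[X] of the union of the two planes. -/
abbrev twoPlanesRing := MvPolynomial (Fin 4) K ⧸ twoPlanesIdeal K

/-- The induced action of the generator of G = ℤ/2 on K[X]. -/
def sigmaQ : twoPlanesRing K →ₐ[K] twoPlanesRing K :=
  Ideal.Quotient.liftₐ (twoPlanesIdeal K)
    ((Ideal.Quotient.mkₐ K (twoPlanesIdeal K)).comp (tauMap K))
    (fun a ha => by
      have h := (Ideal.Quotient.eq_zero_iff_mem (I := twoPlanesIdeal K)).mpr
        (tauMap_mem K a ha)
      simpa using h)

/-- Restriction to the first plane, as substitution x₃ := x₁, x₄ := x₂. -/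
def beta1 : MvPolynomial (Fin 4) K →ₐ[K] MvPolynomial (Fin 2) K :=
  aeval ![X 0, X 1, X 0, X 1]

/-- Restriction to the second plane, as substitution x₃ := -x₁, x₄ := -x₂. -/
def beta2 : MvPolynomial (Fin 4) K →ₐ[K] MvPolynomial (Fin 2) K :=
  aeval ![X 0, X 1, -X 0, -X 1]

/-- Inclusion K[y₁,y₂] → K[x₁,x₂,x₃,x₄]. -/
def gam : MvPolynomial (Fin 2) K →ₐ[K] MvPolynomial (Fin 4) K :=
  aeval ![X 0, X 1]

lemma sub_gam_beta1_mem (p : MvPolynomial (Fin 4) K) :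
    p - gam K (beta1 K p) ∈ planeIdeal1 K := by
  induction p using MvPolynomial.induction_on with
  | C a => simp [gam, beta1]
  | add p q hp hq =>
      have h := Ideal.add_mem _ hp hq
      convert h using 1
      simp only [map_add]; ring
  | mul_X p i hp =>
      have hXi : X i - gam K (beta1 K (X i)) ∈ planeIdeal1 K := by
        fin_cases i <;> simp [gam, beta1, planeIdeal1] <;>
          rw [Ideal.mem_span_pair]
        · exact ⟨-1, 0, by ring⟩
        · exact ⟨0, -1, by ring⟩
      have h := Ideal.add_mem _ (Ideal.mul_mem_right (X i) _ hp)
        (Ideal.mul_mem_left _ (gam K (beta1 K p)) hXi)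
      convert h using 1
      simp only [map_mul]; ring

lemma sub_gam_beta2_mem (p : MvPolynomial (Fin 4) K) :
    p - gam K (beta2 K p) ∈ planeIdeal2 K := by
  induction p using MvPolynomial.induction_on with
  | C a => simp [gam, beta2]
  | add p q hp hq =>
      have h := Ideal.add_mem _ hp hq
      convert h using 1
      simp only [map_add]; ring
  | mul_X p i hp =>
      have hXi : X i - gam K (beta2 K (X i)) ∈ planeIdeal2 K := by
        fin_cases i <;> simp [gam, beta2, planeIdeal2] <;>
          rw [Ideal.mem_span_pair]
        · exact ⟨1, 0, by ring⟩
        · exact ⟨0, 1, by ring⟩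
      have h := Ideal.add_mem _ (Ideal.mul_mem_right (X i) _ hp)
        (Ideal.mul_mem_left _ (gam K (beta2 K p)) hXi)
      convert h using 1
      simp only [map_mul]; ring

lemma beta1_gam (r : MvPolynomial (Fin 2) K) : beta1 K (gam K r) = r := by
  have h : (beta1 K).comp (gam K) = AlgHom.id K (MvPolynomial (Fin 2) K) := by
    apply MvPolynomial.algHom_ext
    intro i
    fin_cases i <;> simp [beta1, gam]
  calc beta1 K (gam K r) = ((beta1 K).comp (gam K)) r := rfl
    _ = r := by rw [h]; rfl

lemma beta2_tau (p : MvPolynomial (Fin 4) K) : beta2 K (tauMap K p) = beta1 K p := by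
  have h : (beta2 K).comp (tauMap K) = beta1 K := by
    apply MvPolynomial.algHom_ext
    intro i
    fin_cases i <;> simp [beta1, beta2, tauMap]
  calc beta2 K (tauMap K p) = ((beta2 K).comp (tauMap K)) p := rfl
    _ = beta1 K p := by rw [h]

lemma tau_invol (p : MvPolynomial (Fin 4) K) : tauMap K (tauMap K p) = p := by
  have h : (tauMap K).comp (tauMap K) = AlgHom.id K (MvPolynomial (Fin 4) K) := by
    apply MvPolynomial.algHom_ext
    intro i
    fin_cases i <;> simp [tauMap]
  calc tauMap K (tauMap K p) = ((tauMap K).comp (tauMap K)) p := rfl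
    _ = p := by rw [h]; rfl

lemma beta1_vanish (p : MvPolynomial (Fin 4) K) (hp : p ∈ planeIdeal1 K) :
    beta1 K p = 0 := by
  rw [planeIdeal1, Ideal.mem_span_pair] at hp
  obtain ⟨a, b, rfl⟩ := hp
  simp [beta1]

lemma sigmaQ_mk (p : MvPolynomial (Fin 4) K) :
    sigmaQ K (Ideal.Quotient.mk (twoPlanesIdeal K) p) =
      Ideal.Quotient.mk (twoPlanesIdeal K) (tauMap K p) := by
  simp [sigmaQ, Ideal.Quotient.liftₐ_apply, Ideal.Quotient.lift_mk]
  rfl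

lemma range_pair {A : Type*} (a b : A) : Set.range ![a, b] = {a, b} := by
  ext x
  constructor
  · rintro ⟨i, rfl⟩
    fin_cases i
    · exact Or.inl rfl
    · exact Or.inr rfl
  · rintro (rfl | rfl)
    · exact ⟨0, rfl⟩
    · exact ⟨1, rfl⟩

lemma mk_gam_eq_aeval (r : MvPolynomial (Fin 2) K) :
    Ideal.Quotient.mk (twoPlanesIdeal K) (gam K r) =
      aeval ![Ideal.Quotient.mk (twoPlanesIdeal K) (X 0),
        Ideal.Quotient.mk (twoPlanesIdeal K) (X 1)] r := by
  have h : (Ideal.Quotient.mkₐ K (twoPlanesIdeal K)).comp (gam K) =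
      aeval ![Ideal.Quotient.mk (twoPlanesIdeal K) (X 0),
        Ideal.Quotient.mk (twoPlanesIdeal K) (X 1)] := by
    rw [gam, MvPolynomial.comp_aeval]
    congr 1
    funext i
    fin_cases i <;> simp
  calc Ideal.Quotient.mk (twoPlanesIdeal K) (gam K r)
      = ((Ideal.Quotient.mkₐ K (twoPlanesIdeal K)).comp (gam K)) r := rfl
    _ = _ := by rw [h]

/-- For char(K) ≠ 2, let X ⊆ K⁴ be the union of the two planes
{x₁ = x₃, x₂ = x₄} and {x₁ = -x₃, x₂ = -x₄}, with the order-2 group acting by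
σ·(x₁,x₂,x₃,x₄) = (x₁,x₂,-x₃,-x₄).  Then the invariant ring K[X]^G is the polynomial
ring K[x̄₁, x̄₂] in two variables, although σ is not a reflection on X: its fixed point
set in X is just the origin (which has codimension 2 in the 2-dimensional X). -/
theorem twoPlanes_invariants_polynomial [IsAlgClosed K] (hchar : (2 : K) ≠ 0) :
    {f : twoPlanesRing K | sigmaQ K f = f} =
      (Algebra.adjoin K {Ideal.Quotient.mk (twoPlanesIdeal K) (X 0),
        Ideal.Quotient.mk (twoPlanesIdeal K) (X 1)} : Set (twoPlanesRing K)) ∧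
    Nonempty (MvPolynomial (Fin 2) K ≃ₐ[K]
      ↥(Algebra.adjoin K {Ideal.Quotient.mk (twoPlanesIdeal K) (X 0),
        Ideal.Quotient.mk (twoPlanesIdeal K) (X 1)})) ∧
    {x : Fin 4 → K |
        ((x 0 = x 2 ∧ x 1 = x 3) ∨ (x 0 = -x 2 ∧ x 1 = -x 3)) ∧
          (![x 0, x 1, -(x 2), -(x 3)] = x)} = {0} := by
  set mk4 := Ideal.Quotient.mk (twoPlanesIdeal K) with hmk4
  have hC2 : (C (2 : K) : MvPolynomial (Fin 4) K) = 2 := by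
    rw [map_ofNat]
  have h1' : (C (2⁻¹ : K) : MvPolynomial (Fin 4) K) * 2 = 1 := by
    rw [← hC2, ← C_mul, inv_mul_cancel₀ hchar, C_1]
  -- the adjoin as a subalgebra
  have adj_eq : Algebra.adjoin K {mk4 (X 0), mk4 (X 1)} =
      (aeval ![mk4 (X 0), mk4 (X 1)] :
        MvPolynomial (Fin 2) K →ₐ[K] twoPlanesRing K).range := by
    rw [← range_pair (mk4 (X 0)) (mk4 (X 1))]
    exact Algebra.adjoin_range_eq_range_aeval K _
  refine ⟨?_, ?_, ?_⟩
  · -- invariants = adjoin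
    ext f
    simp only [Set.mem_setOf_eq, SetLike.mem_coe]
    constructor
    · intro hf
      obtain ⟨p, rfl⟩ := Ideal.Quotient.mk_surjective f
      rw [← hmk4] at hf ⊢
      rw [sigmaQ_mk] at hf
      set q : MvPolynomial (Fin 4) K := C (2⁻¹ : K) * (p + tauMap K p) with hq
      have hqp : q - p = C (2⁻¹ : K) * (tauMap K p - p) := by
        rw [hq]; linear_combination p * h1'
      have hmkq : mk4 q = mk4 p := by
        rw [hmk4, Ideal.Quotient.eq, hqp]
        exact Ideal.mul_mem_left _ _ (Ideal.Quotient.eq.mp hf)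
      have hqtau : tauMap K q = q := by
        rw [hq]
        simp only [map_mul, map_add, tau_invol]
        rw [show tauMap K (C (2⁻¹ : K)) = C (2⁻¹ : K) from
          (tauMap K).commutes' (2⁻¹ : K)]
        ring
      have hbeta : beta1 K q = beta2 K q := by
        conv_rhs => rw [← hqtau]
        rw [beta2_tau]
      have hmem : q - gam K (beta1 K q) ∈ twoPlanesIdeal K := by
        refine ⟨sub_gam_beta1_mem K q, ?_⟩
        rw [hbeta]
        exact sub_gam_beta2_mem K q
      have : mk4 q = mk4 (gam K (beta1 K q)) := by
        rw [hmk4, Ideal.Quotient.eq]; exact hmem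
      rw [← hmkq, this, mk_gam_eq_aeval, ← hmk4, adj_eq]
      exact ⟨beta1 K q, rfl⟩
    · intro hf
      have hle : Algebra.adjoin K {mk4 (X 0), mk4 (X 1)} ≤
          AlgHom.equalizer (sigmaQ K) (AlgHom.id K (twoPlanesRing K)) := by
        apply Algebra.adjoin_le
        rintro x (rfl | rfl) <;>
        · show sigmaQ K _ = _
          rw [hmk4, sigmaQ_mk]
          simp [tauMap]
      exact hle hf
  · -- polynomial ring in two variables
    set α : MvPolynomial (Fin 2) K →ₐ[K] twoPlanesRing K :=
      aeval ![mk4 (X 0), mk4 (X 1)] with hα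
    have hinj : Function.Injective α := by
      rw [injective_iff_map_eq_zero]
      intro P hP
      have hPg : mk4 (gam K P) = 0 := by
        rw [hmk4, mk_gam_eq_aeval, ← hmk4]; exact hP
      have hmem : gam K P ∈ twoPlanesIdeal K := by
        rwa [hmk4, Ideal.Quotient.eq_zero_iff_mem] at hPg
      have := beta1_vanish K (gam K P) hmem.1
      rwa [beta1_gam] at this
    exact ⟨(AlgEquiv.ofInjective α hinj).trans (Subalgebra.equivOfEq _ _ adj_eq.symm)⟩
  · -- fixed points in X are just the origin
    ext x
    simp only [Set.mem_setOf_eq, Set.mem_singleton_iff]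
    constructor
    · rintro ⟨hbr, heq⟩
      have h2 : -(x 2) = x 2 := by
        have := congrFun heq 2
        simpa using this
      have h3 : -(x 3) = x 3 := by
        have := congrFun heq 3
        simpa using this
      have hx2 : x 2 = 0 := by
        have : (2 : K) * x 2 = 0 := by rw [two_mul]; linear_combination -h2
        exact (mul_eq_zero.mp this).resolve_left hchar
      have hx3 : x 3 = 0 := by
        have : (2 : K) * x 3 = 0 := by rw [two_mul]; linear_combination -h3
        exact (mul_eq_zero.mp this).resolve_left hchar
      have hx0 : x 0 = 0 := by
        rcases hbr with ⟨h, _⟩ | ⟨h, _⟩ <;> rw [h, hx2] <;> simp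
      have hx1 : x 1 = 0 := by
        rcases hbr with ⟨_, h⟩ | ⟨_, h⟩ <;> rw [h, hx3] <;> simp
      funext i
      fin_cases i <;> simpa
    · rintro rfl
      refine ⟨Or.inl ⟨rfl, rfl⟩, ?_⟩
      funext i
      fin_cases i <;> simp
end
end

section
/- A finitely generated subalgebra A ⊆ K[X]^G is separating if and only if the induced morphism θ: Spec(K[X]^G) → Spec(A), p ↦ p ∩ A, is injective. -/
noncomputable section

open TensorProduct PrimeSpectrum

section Defs

variable (K R G : Type*) [Field K] [CommRing R] [Algebra K R] [Group G]

section AuxLemmas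

set_option maxHeartbeats 2000000
set_option synthInstance.maxHeartbeats 1000000

/-- Weak Nullstellensatz: a nontrivial finitely generated algebra over an algebraically
closed field has a `K`-point. -/
theorem exists_algHom_to_algClosed {K C : Type*} [Field K] [IsAlgClosed K] [CommRing C]
    [Nontrivial C] [Algebra K C] (h : Algebra.FiniteType K C) : Nonempty (C →ₐ[K] K) := by
  obtain ⟨n, f, hf⟩ := Algebra.FiniteType.iff_quotient_mvPolynomial''.mp h
  obtain ⟨m, hm⟩ := Ideal.exists_maximal C
  haveI : (Ideal.comap (f : MvPolynomial (Fin n) K →+* C) m).IsMaximal :=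
    Ideal.comap_isMaximal_of_surjective _ hf
  obtain ⟨x, hx⟩ := (MvPolynomial.isMaximal_iff_eq_vanishingIdeal_singleton).mp this
  have hker : ∀ p ∈ RingHom.ker (f : MvPolynomial (Fin n) K →+* C),
      (MvPolynomial.aeval x) p = 0 := by
    intro p hp
    have hpI : p ∈ Ideal.comap (f : MvPolynomial (Fin n) K →+* C) m := by
      rw [Ideal.mem_comap]
      rw [RingHom.mem_ker] at hp
      rw [hp]; exact m.zero_mem
    rw [hx] at hpI
    have := (MvPolynomial.mem_vanishingIdeal_singleton_iff x p).mp hpI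
    exact this
  exact ⟨(Ideal.Quotient.liftₐ (RingHom.ker (f : MvPolynomial (Fin n) K →+* C))
      (MvPolynomial.aeval x) hker).comp
    (Ideal.quotientKerAlgEquivOfSurjective hf).symm.toAlgHom⟩

/-- If two `K`-points of `R` agreeing on `SA` must agree on `f`, then the same holds for
points with values in an arbitrary field. -/
theorem ringHom_agree_of_algHom_agree {K R L : Type*} [Field K] [IsAlgClosed K]
    [CommRing R] [Algebra K R] (hfg : Algebra.FiniteType K R)
    (SA : Set R) (halg : ∀ k : K, algebraMap K R k ∈ SA)
    (f : R) (hf : ∀ x y : R →ₐ[K] K, (∀ a ∈ SA, x a = y a) → x f = y f)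
    [Field L] (u v : R →+* L) (huv : ∀ a ∈ SA, u a = v a) : u f = v f := by
  by_contra hne
  set c : L := u f - v f with hc
  have hc0 : c ≠ 0 := sub_ne_zero.mpr hne
  letI : Algebra K L := (u.comp (algebraMap K R)).toAlgebra
  have hvK : ∀ k : K, v (algebraMap K R k) = algebraMap K L k := fun k =>
    (huv _ (halg k)).symm
  let u' : R →ₐ[K] L := { toRingHom := u, commutes' := fun k => rfl }
  let v' : R →ₐ[K] L := { toRingHom := v, commutes' := fun k => hvK k }
  obtain ⟨s, hs⟩ := hfg.out
  set C : Subalgebra K L := Algebra.adjoin K ((u '' s) ∪ (v '' s) ∪ {c⁻¹}) with hC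
  have hu_mem : ∀ r : R, u r ∈ C := by
    intro r
    have : u r ∈ (Algebra.adjoin K (↑s : Set R)).map u' := ⟨r, by rw [hs]; trivial, rfl⟩
    rw [AlgHom.map_adjoin] at this
    exact Algebra.adjoin_mono (by intro z hz; exact Or.inl (Or.inl hz)) this
  have hv_mem : ∀ r : R, v r ∈ C := by
    intro r
    have : v r ∈ (Algebra.adjoin K (↑s : Set R)).map v' := ⟨r, by rw [hs]; trivial, rfl⟩
    rw [AlgHom.map_adjoin] at this
    exact Algebra.adjoin_mono (by intro z hz; exact Or.inl (Or.inr hz)) this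
  have hcC : c ∈ C := sub_mem (hu_mem f) (hv_mem f)
  have hcinvC : c⁻¹ ∈ C := Algebra.subset_adjoin (Or.inr rfl)
  have hCfg : Algebra.FiniteType K C := by
    classical
    rw [← Subalgebra.fg_iff_finiteType]
    refine ⟨(s.image u ∪ s.image v) ∪ {c⁻¹}, ?_⟩
    rw [hC]
    congr 1
    simp only [Finset.coe_union, Finset.coe_image, Finset.coe_singleton]
  haveI : Nontrivial C := ⟨⟨1, 0, by
    intro hcont
    exact one_ne_zero (congrArg Subtype.val hcont)⟩⟩
  obtain ⟨χ⟩ := exists_algHom_to_algClosed (K := K) (C := ↥C) hCfg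
  let x : R →ₐ[K] K := χ.comp (u'.codRestrict C hu_mem)
  let y : R →ₐ[K] K := χ.comp (v'.codRestrict C hv_mem)
  have hxy : ∀ a ∈ SA, x a = y a := by
    intro a ha
    have : u a = v a := huv a ha
    simp only [x, y, AlgHom.comp_apply]
    congr 1
    exact Subtype.ext this
  have hfeq : x f = y f := hf x y hxy
  have hchi : χ ⟨c, hcC⟩ = 0 := by
    have : (⟨c, hcC⟩ : C) = (⟨u f, hu_mem f⟩ : C) - ⟨v f, hv_mem f⟩ := by
      ext; simp [hc]
    rw [this, map_sub]
    have h1 : χ ⟨u f, hu_mem f⟩ = x f := rfl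
    rw [h1]
    have h2 : χ ⟨v f, hv_mem f⟩ = y f := rfl
    rw [h2, hfeq, sub_self]
  have hone : (⟨c, hcC⟩ : C) * ⟨c⁻¹, hcinvC⟩ = 1 := by
    ext
    simp [mul_inv_cancel₀ hc0]
  have := congrArg χ hone
  rw [map_mul, hchi, zero_mul, map_one] at this
  exact zero_ne_one this

/-- `R` is integral over the invariant subalgebra of a finite group action. -/
theorem invariants_isIntegral_aux (K R G : Type*) [Field K] [CommRing R] [Algebra K R]
    [Group G] [Finite G] (φ : G →* (R ≃ₐ[K] R)) :
    Algebra.IsIntegral ↥(invariantsAlg K R G φ) R := by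
  cases nonempty_fintype G
  letI : MulSemiringAction G R := MulSemiringAction.compHom _ φ
  constructor
  intro r
  have hsmul : ∀ (σ : G) (x : R), σ • x = φ σ x := fun σ x => rfl
  set B := invariantsAlg K R G φ with hB
  have hc : ↑(prodXSubSMul G R r).coeffs ⊆ (B.toSubring : Set R) := by
    intro a ha
    rw [Finset.mem_coe, Polynomial.mem_coeffs_iff] at ha
    obtain ⟨n, _, rfl⟩ := ha
    intro σ
    rw [← hsmul σ]
    exact prodXSubSMul.coeff G R r σ n
  refine ⟨(prodXSubSMul G R r).toSubring B.toSubring hc,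
    (Polynomial.monic_toSubring _ _ _).mpr (prodXSubSMul.monic G R r), ?_⟩
  have hmap : ((prodXSubSMul G R r).toSubring B.toSubring hc).map
      (B.toSubring.subtype) = prodXSubSMul G R r := Polynomial.map_toSubring _ _ _
  have hh : (algebraMap ↥B R) = B.toSubring.subtype := rfl
  rw [Polynomial.eval₂_eq_eval_map, hh, hmap]
  exact prodXSubSMul.eval G R r

universe uS uT

/-- Amalgamation: two primes of `T` with the same contraction to `S` admit homomorphisms
to a common field which agree on `S` and have the given primes as kernels. -/
theorem exists_amalgam {S : Type uS} {T : Type uT} [CommRing S] [CommRing T]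
    (ι : S →+* T) (P1 P2 : Ideal T) (h1 : P1.IsPrime) (h2 : P2.IsPrime)
    (hq : Ideal.comap ι P1 = Ideal.comap ι P2) :
    ∃ (E : Type uT) (_ : Field E) (u v : T →+* E),
      (∀ a : S, u (ι a) = v (ι a)) ∧ (∀ z : T, u z = 0 ↔ z ∈ P1) ∧
        (∀ z : T, v z = 0 ↔ z ∈ P2) := by
  haveI := h1
  haveI := h2
  haveI : (Ideal.comap ι P1).IsPrime := Ideal.IsPrime.comap ι
  let ρ1 : (S ⧸ Ideal.comap ι P1) →+* T ⧸ P1 := Ideal.quotientMap P1 ι le_rfl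
  let ρ2 : (S ⧸ Ideal.comap ι P1) →+* T ⧸ P2 := Ideal.quotientMap P2 ι (le_of_eq hq)
  have hρ1 : Function.Injective ρ1 := Ideal.quotientMap_injective' le_rfl
  have hρ2 : Function.Injective ρ2 := Ideal.quotientMap_injective' (le_of_eq hq.symm)
  let g1 : (S ⧸ Ideal.comap ι P1) →+* FractionRing (T ⧸ P1) :=
    (algebraMap (T ⧸ P1) (FractionRing (T ⧸ P1))).comp ρ1
  let g2 : (S ⧸ Ideal.comap ι P1) →+* FractionRing (T ⧸ P2) :=
    (algebraMap (T ⧸ P2) (FractionRing (T ⧸ P2))).comp ρ2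
  have hg1 : Function.Injective g1 :=
    (IsFractionRing.injective (T ⧸ P1) (FractionRing (T ⧸ P1))).comp hρ1
  have hg2 : Function.Injective g2 :=
    (IsFractionRing.injective (T ⧸ P2) (FractionRing (T ⧸ P2))).comp hρ2
  letI : Algebra (FractionRing (S ⧸ Ideal.comap ι P1)) (FractionRing (T ⧸ P1)) :=
    (IsFractionRing.lift hg1).toAlgebra
  letI : Algebra (FractionRing (S ⧸ Ideal.comap ι P1)) (FractionRing (T ⧸ P2)) :=
    (IsFractionRing.lift hg2).toAlgebra
  haveI : Nontrivial
      ((FractionRing (T ⧸ P1)) ⊗[FractionRing (S ⧸ Ideal.comap ι P1)] (FractionRing (T ⧸ P2))) := by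
    let b1 := Module.Basis.ofVectorSpace (FractionRing (S ⧸ Ideal.comap ι P1)) (FractionRing (T ⧸ P1))
    let b2 := Module.Basis.ofVectorSpace (FractionRing (S ⧸ Ideal.comap ι P1)) (FractionRing (T ⧸ P2))
    haveI : Nonempty
        (↑(Module.Basis.ofVectorSpaceIndex (FractionRing (S ⧸ Ideal.comap ι P1)) (FractionRing (T ⧸ P1)))
          × ↑(Module.Basis.ofVectorSpaceIndex (FractionRing (S ⧸ Ideal.comap ι P1))
            (FractionRing (T ⧸ P2)))) :=
      ⟨(b1.index_nonempty.some, b2.index_nonempty.some)⟩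
    exact (b1.tensorProduct b2).repr.toEquiv.nontrivial
  obtain ⟨md, hmd⟩ := Ideal.exists_maximal
    ((FractionRing (T ⧸ P1)) ⊗[FractionRing (S ⧸ Ideal.comap ι P1)] (FractionRing (T ⧸ P2)))
  haveI := hmd
  letI : Field (_ ⧸ md) := Ideal.Quotient.field md
  let θ1 : FractionRing (T ⧸ P1) →+* (_ ⧸ md) := (Ideal.Quotient.mk md).comp
    (Algebra.TensorProduct.includeLeft :
      FractionRing (T ⧸ P1) →ₐ[FractionRing (S ⧸ Ideal.comap ι P1)]
        (FractionRing (T ⧸ P1)) ⊗[FractionRing (S ⧸ Ideal.comap ι P1)]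
          (FractionRing (T ⧸ P2))).toRingHom
  let θ2 : FractionRing (T ⧸ P2) →+* (_ ⧸ md) := (Ideal.Quotient.mk md).comp
    (Algebra.TensorProduct.includeRight :
      FractionRing (T ⧸ P2) →ₐ[FractionRing (S ⧸ Ideal.comap ι P1)]
        (FractionRing (T ⧸ P1)) ⊗[FractionRing (S ⧸ Ideal.comap ι P1)]
          (FractionRing (T ⧸ P2))).toRingHom
  have hθ1 : Function.Injective θ1 := θ1.injective
  have hθ2 : Function.Injective θ2 := θ2.injective
  refine ⟨_, inferInstance,
    (θ1.comp (algebraMap (T ⧸ P1) (FractionRing (T ⧸ P1)))).comp (Ideal.Quotient.mk P1),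
    (θ2.comp (algebraMap (T ⧸ P2) (FractionRing (T ⧸ P2)))).comp (Ideal.Quotient.mk P2),
    ?_, ?_, ?_⟩
  · intro a
    show θ1 (algebraMap (T ⧸ P1) (FractionRing (T ⧸ P1)) (Ideal.Quotient.mk P1 (ι a)))
      = θ2 (algebraMap (T ⧸ P2) (FractionRing (T ⧸ P2)) (Ideal.Quotient.mk P2 (ι a)))
    have e1 : Ideal.Quotient.mk P1 (ι a) = ρ1 (Ideal.Quotient.mk (Ideal.comap ι P1) a) :=
      (Ideal.quotientMap_mk).symm
    have e2 : Ideal.Quotient.mk P2 (ι a) = ρ2 (Ideal.Quotient.mk (Ideal.comap ι P1) a) :=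
      (Ideal.quotientMap_mk).symm
    rw [e1, e2]
    have f1 : algebraMap (T ⧸ P1) (FractionRing (T ⧸ P1))
          (ρ1 (Ideal.Quotient.mk (Ideal.comap ι P1) a))
        = algebraMap (FractionRing (S ⧸ Ideal.comap ι P1)) (FractionRing (T ⧸ P1))
          (algebraMap (S ⧸ Ideal.comap ι P1) (FractionRing (S ⧸ Ideal.comap ι P1))
            (Ideal.Quotient.mk (Ideal.comap ι P1) a)) := by
      have hh : algebraMap (FractionRing (S ⧸ Ideal.comap ι P1)) (FractionRing (T ⧸ P1))
          = IsFractionRing.lift hg1 := rfl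
      rw [hh, IsFractionRing.lift_algebraMap]
      rfl
    have f2 : algebraMap (T ⧸ P2) (FractionRing (T ⧸ P2))
          (ρ2 (Ideal.Quotient.mk (Ideal.comap ι P1) a))
        = algebraMap (FractionRing (S ⧸ Ideal.comap ι P1)) (FractionRing (T ⧸ P2))
          (algebraMap (S ⧸ Ideal.comap ι P1) (FractionRing (S ⧸ Ideal.comap ι P1))
            (Ideal.Quotient.mk (Ideal.comap ι P1) a)) := by
      have hh : algebraMap (FractionRing (S ⧸ Ideal.comap ι P1)) (FractionRing (T ⧸ P2))
          = IsFractionRing.lift hg2 := rfl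
      rw [hh, IsFractionRing.lift_algebraMap]
      rfl
    rw [f1, f2]
    show (Ideal.Quotient.mk md) (Algebra.TensorProduct.includeLeft
        (algebraMap (FractionRing (S ⧸ Ideal.comap ι P1)) (FractionRing (T ⧸ P1)) _))
      = (Ideal.Quotient.mk md) ((Algebra.TensorProduct.includeRight :
          FractionRing (T ⧸ P2) →ₐ[FractionRing (S ⧸ Ideal.comap ι P1)] _)
        (algebraMap (FractionRing (S ⧸ Ideal.comap ι P1)) (FractionRing (T ⧸ P2)) _))
    rw [AlgHom.commutes, AlgHom.commutes]
  · intro z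
    constructor
    · intro h
      have h1 : θ1 (algebraMap (T ⧸ P1) (FractionRing (T ⧸ P1)) (Ideal.Quotient.mk P1 z))
          = θ1 0 := by simpa [map_zero] using h
      have h2 := hθ1 h1
      have h3 : Ideal.Quotient.mk P1 z = 0 := IsFractionRing.injective (T ⧸ P1)
        (FractionRing (T ⧸ P1)) (by rw [h2, map_zero])
      rwa [← Ideal.Quotient.eq_zero_iff_mem]
    · intro h
      have hz : Ideal.Quotient.mk P1 z = 0 := Ideal.Quotient.eq_zero_iff_mem.mpr h
      show θ1 (algebraMap (T ⧸ P1) (FractionRing (T ⧸ P1)) (Ideal.Quotient.mk P1 z)) = 0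
      rw [hz, map_zero, map_zero]
  · intro z
    constructor
    · intro h
      have h1 : θ2 (algebraMap (T ⧸ P2) (FractionRing (T ⧸ P2)) (Ideal.Quotient.mk P2 z))
          = θ2 0 := by simpa [map_zero] using h
      have h2 := hθ2 h1
      have h3 : Ideal.Quotient.mk P2 z = 0 := IsFractionRing.injective (T ⧸ P2)
        (FractionRing (T ⧸ P2)) (by rw [h2, map_zero])
      rwa [← Ideal.Quotient.eq_zero_iff_mem]
    · intro h
      have hz : Ideal.Quotient.mk P2 z = 0 := Ideal.Quotient.eq_zero_iff_mem.mpr h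
      show θ2 (algebraMap (T ⧸ P2) (FractionRing (T ⧸ P2)) (Ideal.Quotient.mk P2 z)) = 0
      rw [hz, map_zero, map_zero]


end AuxLemmas

section Statements

set_option synthInstance.maxHeartbeats 1000000
set_option maxHeartbeats 1000000

variable {K R G : Type*} [Field K] [IsAlgClosed K] [CommRing R] [IsReduced R] [Nontrivial R]
  [Algebra K R] [Group G] [Finite G]

/-- A finitely generated subalgebra A ⊆ K[X]^G is separating if and only
if the induced morphism θ : Spec(K[X]^G) → Spec(A), p ↦ p ∩ A, is injective. -/
theorem separating_iff_comap_injective (hfg : Algebra.FiniteType K R)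
    (φ : G →* (R ≃ₐ[K] R))
    (A : Subalgebra K (invariantsAlg K R G φ)) (hAfg : A.FG) :
    (∀ x y : R →ₐ[K] K,
        (∃ f ∈ invariantsAlg K R G φ, x f ≠ y f) →
          ∃ g : invariantsAlg K R G φ, g ∈ A ∧ x (g : R) ≠ y (g : R)) ↔
      Function.Injective
        (PrimeSpectrum.comap (algebraMap A (invariantsAlg K R G φ))) := by
  constructor
  · -- separating implies injective on spectra
    intro hsep p1 p2 hp
    haveI hint : Algebra.IsIntegral ↥(invariantsAlg K R G φ) R :=
      invariants_isIntegral_aux K R G φ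
    haveI := p1.isPrime
    haveI := p2.isPrime
    have hbot : ∀ p : PrimeSpectrum ↥(invariantsAlg K R G φ),
        Ideal.comap (algebraMap ↥(invariantsAlg K R G φ) R) (⊥ : Ideal R) ≤ p.asIdeal := by
      intro p x hx
      rw [Ideal.mem_comap, Ideal.mem_bot] at hx
      have : x = 0 := Subtype.ext hx
      rw [this]; exact p.asIdeal.zero_mem
    obtain ⟨P1, -, hP1p, hP1⟩ :=
      Ideal.exists_ideal_over_prime_of_isIntegral p1.asIdeal (⊥ : Ideal R) (hbot p1)
    obtain ⟨P2, -, hP2p, hP2⟩ :=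
      Ideal.exists_ideal_over_prime_of_isIntegral p2.asIdeal (⊥ : Ideal R) (hbot p2)
    haveI := hP1p
    haveI := hP2p
    set ιA : ↥A →+* R :=
      (algebraMap ↥(invariantsAlg K R G φ) R).comp
        (algebraMap ↥A ↥(invariantsAlg K R G φ)) with hiA
    have hq12 : Ideal.comap ιA P1 = Ideal.comap ιA P2 := by
      have hasI := congrArg PrimeSpectrum.asIdeal hp
      rw [PrimeSpectrum.comap_asIdeal, PrimeSpectrum.comap_asIdeal] at hasI
      rw [hiA, ← Ideal.comap_comap, ← Ideal.comap_comap, hP1, hP2]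
      exact hasI
    obtain ⟨E, hE, u, v, huva, hkeru, hkerv⟩ := exists_amalgam ιA P1 P2 hP1p hP2p hq12
    letI := hE
    have huv : ∀ a ∈ Set.range ιA, u a = v a := by
      rintro _ ⟨a, rfl⟩
      exact huva a
    have hsep2 : ∀ f0 : R, f0 ∈ invariantsAlg K R G φ → u f0 = v f0 := by
      intro f0 hf0
      refine ringHom_agree_of_algHom_agree hfg (Set.range ιA) ?_ f0 ?_ u v huv
      · intro k
        exact ⟨algebraMap K ↥A k, rfl⟩
      · intro x y hxy
        by_contra hne
        obtain ⟨g, hgA, hgne⟩ := hsep x y ⟨f0, hf0, hne⟩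
        exact hgne (hxy _ ⟨⟨g, hgA⟩, rfl⟩)
    have hPI : p1.asIdeal = p2.asIdeal := by
      ext f
      have hf1 : f ∈ p1.asIdeal ↔ (f : R) ∈ P1 := by
        rw [← hP1]; rfl
      have hf2 : f ∈ p2.asIdeal ↔ (f : R) ∈ P2 := by
        rw [← hP2]; rfl
      rw [hf1, hf2, ← hkeru, ← hkerv, hsep2 (f : R) f.2]
    exact PrimeSpectrum.ext hPI
  · -- injective implies separating
    intro hinj x y ⟨f, hfB, hxy⟩
    by_contra hcon
    push_neg at hcon
    let x' : ↥(invariantsAlg K R G φ) →ₐ[K] K :=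
      x.comp (invariantsAlg K R G φ).val
    let y' : ↥(invariantsAlg K R G φ) →ₐ[K] K :=
      y.comp (invariantsAlg K R G φ).val
    haveI : (RingHom.ker x'.toRingHom).IsPrime := RingHom.ker_isPrime _
    haveI : (RingHom.ker y'.toRingHom).IsPrime := RingHom.ker_isPrime _
    let px : PrimeSpectrum ↥(invariantsAlg K R G φ) := ⟨RingHom.ker x'.toRingHom, inferInstance⟩
    let py : PrimeSpectrum ↥(invariantsAlg K R G φ) := ⟨RingHom.ker y'.toRingHom, inferInstance⟩
    have hcomap : PrimeSpectrum.comap (algebraMap ↥A ↥(invariantsAlg K R G φ)) px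
        = PrimeSpectrum.comap (algebraMap ↥A ↥(invariantsAlg K R G φ)) py := by
      apply PrimeSpectrum.ext
      rw [PrimeSpectrum.comap_asIdeal, PrimeSpectrum.comap_asIdeal]
      ext a
      have hxa : x' (algebraMap ↥A ↥(invariantsAlg K R G φ) a)
          = y' (algebraMap ↥A ↥(invariantsAlg K R G φ) a) := hcon _ a.2
      simp only [Ideal.mem_comap, RingHom.mem_ker]
      constructor
      · intro h; change _ ∈ RingHom.ker x'.toRingHom at h; change _ ∈ RingHom.ker y'.toRingHom
        rw [RingHom.mem_ker] at h ⊢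
        rw [show (y'.toRingHom : _ → K) = y' from rfl, ← hxa]; exact h
      · intro h; change _ ∈ RingHom.ker y'.toRingHom at h; change _ ∈ RingHom.ker x'.toRingHom
        rw [RingHom.mem_ker] at h ⊢
        rw [show (x'.toRingHom : _ → K) = x' from rfl, hxa]; exact h
    have hpxy : px = py := hinj hcomap
    have hker : RingHom.ker x'.toRingHom = RingHom.ker y'.toRingHom :=
      congrArg PrimeSpectrum.asIdeal hpxy
    have hxy' : x' = y' := by
      ext b
      have hmem : b - algebraMap K _ (x' b) ∈ RingHom.ker x'.toRingHom := by
        rw [RingHom.mem_ker]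
        show x' (b - algebraMap K _ (x' b)) = 0
        rw [map_sub, AlgHom.commutes, Algebra.algebraMap_self, RingHom.id_apply, sub_self]
      rw [hker, RingHom.mem_ker] at hmem
      have : y' (b - algebraMap K _ (x' b)) = 0 := hmem
      rw [map_sub, AlgHom.commutes, Algebra.algebraMap_self, RingHom.id_apply, sub_eq_zero] at this
      exact this.symm
    have : x f = y f := by
      have hx : x f = x' ⟨f, hfB⟩ := rfl
      have hy : y f = y' ⟨f, hfB⟩ := rfl
      rw [hx, hy, hxy']
    exact hxy this


end Statements
end Defs
end
end

section
/- Let (R, m) be a Noetherian local ring with m-adic completion R̂. If Spec(R̂) is connected in codimension k, then Spec(R) is connected in codimension k. -/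
noncomputable section

open TensorProduct PrimeSpectrum

section Defs

variable (K R G : Type*) [Field K] [CommRing R] [Algebra K R] [Group G]

section Statements


section Aux

variable {R S : Type*} [CommRing R] [CommRing S] [Algebra R S]

/-- Key flatness lemma: if `x ∉ p` and `f x * s ∈ pS`, then `s ∈ pS`. -/
lemma flat_key [Module.Flat R S] (p : Ideal R) [p.IsPrime] {x : R} (hx : x ∉ p) {s : S}
    (hs : algebraMap R S x * s ∈ p.map (algebraMap R S)) : s ∈ p.map (algebraMap R S) := by
  classical
  set N := R ⧸ p
  let φ : N →ₗ[R] N := LinearMap.lsmul R N x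
  have hφ : Function.Injective φ := by
    rw [← LinearMap.ker_eq_bot, eq_bot_iff]
    intro a ha
    obtain ⟨r, rfl⟩ := Ideal.Quotient.mk_surjective a
    have hxr : (Ideal.Quotient.mk p (x * r)) = 0 := ha
    have : x * r ∈ p := Ideal.Quotient.eq_zero_iff_mem.mp hxr
    have : r ∈ p := (Ideal.IsPrime.mem_or_mem ‹_› this).resolve_left hx
    simpa [Submodule.mem_bot] using Ideal.Quotient.eq_zero_iff_mem.mpr this
  have hψ : Function.Injective (φ.lTensor S) :=
    Module.Flat.lTensor_preserves_injective_linearMap φ hφ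
  have h1 : ∀ z ∈ (p • (⊤ : Submodule R S)),
      z ⊗ₜ[R] (Ideal.Quotient.mk p 1) = (0 : S ⊗[R] N) := by
    intro z hz
    refine Submodule.smul_induction_on hz ?_ ?_
    · intro r hr t _
      have : r • (Ideal.Quotient.mk p (1 : R)) = 0 := by
        show Ideal.Quotient.mk p (r * 1) = 0
        rw [mul_one]
        exact Ideal.Quotient.eq_zero_iff_mem.mpr hr
      rw [smul_tmul, this, tmul_zero]
    · intro t₁ t₂ h₁ h₂
      rw [add_tmul, h₁, h₂, add_zero]
  have hmem : algebraMap R S x * s ∈ (p • (⊤ : Submodule R S)) := by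
    rw [Ideal.smul_top_eq_map]; exact hs
  have hz : (φ.lTensor S) (s ⊗ₜ[R] (Ideal.Quotient.mk p 1)) = 0 := by
    have : (φ.lTensor S) (s ⊗ₜ[R] (Ideal.Quotient.mk p 1))
        = (algebraMap R S x * s) ⊗ₜ[R] (Ideal.Quotient.mk p 1) := by
      rw [LinearMap.lTensor_tmul]
      show s ⊗ₜ[R] (x • Ideal.Quotient.mk p 1) = _
      rw [← smul_tmul, Algebra.smul_def]
    rw [this]
    exact h1 _ hmem
  have h0 : s ⊗ₜ[R] (Ideal.Quotient.mk p 1) = (0 : S ⊗[R] N) := by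
    apply hψ; rw [hz, map_zero]
  have := congrArg (TensorProduct.tensorQuotEquivQuotSMul S p) h0
  rw [TensorProduct.tensorQuotEquivQuotSMul_tmul_mk, LinearEquiv.map_zero, one_smul,
    Submodule.Quotient.mk_eq_zero, Ideal.smul_top_eq_map] at this
  exact this

lemma faithfullyFlat_comap_surjective [Module.FaithfullyFlat R S] :
    Function.Surjective (PrimeSpectrum.comap (algebraMap R S)) := by
  intro p
  have hproper : p.asIdeal • (⊤ : Submodule R S) ≠ ⊤ :=
    ((Module.FaithfullyFlat.iff_flat_and_proper_ideal R S).mp inferInstance).2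
      p.asIdeal p.isPrime.ne_top
  have hmapne : p.asIdeal.map (algebraMap R S) ≠ ⊤ := by
    intro htop
    apply hproper
    rw [Ideal.smul_top_eq_map, htop]
    rfl
  have hdisj : Disjoint ((p.asIdeal.map (algebraMap R S) : Set S))
      (Algebra.algebraMapSubmonoid S p.asIdeal.primeCompl : Set S) := by
    rw [Set.disjoint_left]
    rintro z hz ⟨a, ha, rfl⟩
    have : (1 : S) ∈ p.asIdeal.map (algebraMap R S) := by
      have := flat_key p.asIdeal ha (s := (1 : S)) (by simpa using hz)
      simpa using this
    exact hmapne ((Ideal.eq_top_iff_one _).mpr this)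
  obtain ⟨q, hqprime, hqle, hqdisj⟩ :=
    Ideal.exists_le_prime_disjoint _ _ hdisj
  refine ⟨⟨q, hqprime⟩, PrimeSpectrum.ext ?_⟩
  apply le_antisymm
  · intro x hxc
    by_contra hxp
    exact Set.disjoint_left.mp hqdisj hxc ⟨x, hxp, rfl⟩
  · exact Ideal.le_comap_map.trans (Ideal.comap_mono hqle)

lemma flat_going_down [Module.Flat R S] (q : PrimeSpectrum S) (p' : PrimeSpectrum R)
    (hp' : p'.asIdeal ≤ q.asIdeal.comap (algebraMap R S)) :
    ∃ q' : PrimeSpectrum S, q'.asIdeal ≤ q.asIdeal ∧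
      PrimeSpectrum.comap (algebraMap R S) q' = p' := by
  set T := q.asIdeal.primeCompl ⊔ Algebra.algebraMapSubmonoid S p'.asIdeal.primeCompl with hT
  have hdisj : Disjoint ((p'.asIdeal.map (algebraMap R S) : Set S)) (T : Set S) := by
    rw [Set.disjoint_left]
    intro z hz hzT
    obtain ⟨y, hy, w, hw, rfl⟩ := Submonoid.mem_sup.mp hzT
    obtain ⟨a, ha, rfl⟩ := hw
    have : y ∈ p'.asIdeal.map (algebraMap R S) :=
      flat_key p'.asIdeal ha (by rwa [mul_comm] at hz)
    exact hy (Ideal.map_le_iff_le_comap.mpr hp' this)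
  obtain ⟨q', hq'prime, hq'le, hq'disj⟩ := Ideal.exists_le_prime_disjoint _ _ hdisj
  refine ⟨⟨q', hq'prime⟩, ?_, PrimeSpectrum.ext ?_⟩
  · intro x hx
    by_contra hxq
    exact Set.disjoint_left.mp hq'disj hx (le_sup_left (α := Submonoid S) (a := q.asIdeal.primeCompl) hxq)
  · apply le_antisymm
    · intro x hxc
      by_contra hxp
      exact Set.disjoint_left.mp hq'disj hxc
        (le_sup_right (α := Submonoid S) ⟨x, hxp, rfl⟩)
    · exact Ideal.le_comap_map.trans (Ideal.comap_mono hq'le)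

lemma flat_lift_chain [Module.Flat R S] :
    ∀ (n : ℕ) (q : PrimeSpectrum S) (c : LTSeries (PrimeSpectrum R)),
      c.length = n → c.last = PrimeSpectrum.comap (algebraMap R S) q →
      ∃ c' : LTSeries (PrimeSpectrum S), c'.length = n ∧ c'.last = q := by
  intro n
  induction n with
  | zero => exact fun q c _ _ => ⟨RelSeries.singleton _ q, rfl, rfl⟩
  | succ n ih =>
    intro q c hlen hlast
    have h0 : c.length ≠ 0 := by omega
    have hlt : c.eraseLast.last < c.last := c.eraseLast_last_rel_last h0
    have hle : c.eraseLast.last.asIdeal ≤ q.asIdeal.comap (algebraMap R S) := by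
      have := hlt.le
      rw [hlast] at this
      exact this
    obtain ⟨q', hq'le, hq'comap⟩ := flat_going_down q c.eraseLast.last hle
    have hq'lt : q' < q := by
      refine lt_of_le_of_ne hq'le fun hEq => ?_
      apply hlt.ne
      rw [hlast, ← hq'comap, hEq]
    obtain ⟨c'', hlen'', hlast''⟩ := ih q' c.eraseLast
      (by rw [RelSeries.eraseLast_length, hlen]; rfl) hq'comap.symm
    refine ⟨c''.snoc q (by rw [hlast'']; exact hq'lt), ?_, ?_⟩
    · show c''.length + 0 + 1 = n + 1; rw [hlen'']
    · simp

lemma flat_height_comap_le [Module.Flat R S] (q : PrimeSpectrum S) :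
    Order.height (PrimeSpectrum.comap (algebraMap R S) q) ≤ Order.height q := by
  apply Order.height_le
  intro c hc
  obtain ⟨c', hl, hlast⟩ := flat_lift_chain c.length q c rfl hc
  calc (c.length : ℕ∞) = (c'.length : ℕ∞) := by rw [hl]
    _ ≤ Order.height c'.last := Order.length_le_height_last
    _ = Order.height q := by rw [hlast]

end Aux

section Aux2

lemma height_univ_subtype {α : Type*} [Preorder α] (x : α) (hx : x ∈ (Set.univ : Set α)) :
    Order.height (⟨x, hx⟩ : (Set.univ : Set α)) = Order.height x := by
  apply le_antisymm
  · exact Order.height_le_height_apply_of_strictMono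
      (fun a : (Set.univ : Set α) => (a : α)) (fun a b h => h) ⟨x, hx⟩
  · exact Order.height_le_height_apply_of_strictMono
      (fun a : α => (⟨a, trivial⟩ : (Set.univ : Set α))) (fun a b h => h) x

lemma faithfullyFlat_adic (R : Type*) [CommRing R] [IsLocalRing R] [IsNoetherianRing R] :
    Module.FaithfullyFlat R (AdicCompletion (IsLocalRing.maximalIdeal R) R) := by
  set m := IsLocalRing.maximalIdeal R with hm
  constructor
  intro J hJ hTop
  rw [IsLocalRing.eq_maximalIdeal hJ, ← hm] at hTop
  have hmap := congrArg (Submodule.map (AdicCompletion.eval m R 1)) hTop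
  rw [Submodule.map_smul'', Submodule.map_top,
    LinearMap.range_eq_top.mpr (AdicCompletion.eval_surjective m R 1)] at hmap
  have hbot : m • (⊤ : Submodule R (R ⧸ (m ^ 1 • ⊤ : Submodule R R))) ≤ ⊥ := by
    rw [Submodule.smul_le]
    intro r hr n _
    obtain ⟨y, rfl⟩ := Submodule.Quotient.mk_surjective _ n
    rw [Submodule.mem_bot, ← Submodule.Quotient.mk_smul, Submodule.Quotient.mk_eq_zero]
    exact Submodule.smul_mem_smul (by rwa [pow_one]) trivial
  have h1 : Submodule.Quotient.mk (1 : R) ∈ (⊥ : Submodule R (R ⧸ (m ^ 1 • ⊤ : Submodule R R))) :=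
    hbot (by rw [hmap]; trivial)
  rw [Submodule.mem_bot, Submodule.Quotient.mk_eq_zero] at h1
  have h2 : (1 : R) ∈ m := by
    have heq : (m ^ 1 • (⊤ : Submodule R R)) = m := by
      rw [pow_one, Ideal.smul_eq_mul, Ideal.mul_top]
    rwa [heq] at h1
  exact (Ideal.ne_top_iff_one m).mp (IsLocalRing.maximalIdeal.isMaximal R).ne_top h2

end Aux2

/-- If the spectrum of the completion of a Noetherian local ring (R, m)
is connected in codimension k, then so is Spec(R). -/



theorem connectedInCodim_of_completion (R : Type*) [CommRing R] [IsLocalRing R]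
    [IsNoetherianRing R] (k : ℕ∞)
    (h : ConnectedInCodim (Set.univ :
      Set (PrimeSpectrum (AdicCompletion (IsLocalRing.maximalIdeal R) R))) k) :
    ConnectedInCodim (Set.univ : Set (PrimeSpectrum R)) k := by
  intro Z hZ hk
  obtain ⟨Cs, hCs, rfl⟩ := hZ
  haveI : Module.FaithfullyFlat R (AdicCompletion (IsLocalRing.maximalIdeal R) R) :=
    faithfullyFlat_adic R
  set φ : PrimeSpectrum (AdicCompletion (IsLocalRing.maximalIdeal R) R) → PrimeSpectrum R :=
    (PrimeSpectrum.comap (algebraMap R (AdicCompletion (IsLocalRing.maximalIdeal R) R))) with hφ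
  have hφc : Continuous φ :=
    PrimeSpectrum.continuous_comap (algebraMap R (AdicCompletion (IsLocalRing.maximalIdeal R) R))
  have hsurj : Function.Surjective φ := faithfullyFlat_comap_surjective
  have hcod : k < codimIn Set.univ (φ ⁻¹' (Set.univ ∩ Cs)) := by
    refine lt_of_lt_of_le hk (le_iInf fun i => ?_)
    obtain ⟨⟨q, hq0⟩, hq⟩ := i
    refine iInf_le_of_le ⟨⟨φ q, trivial⟩, hq⟩ ?_
    refine (height_univ_subtype (φ q) trivial).trans_le (le_of_le_of_eq ?_ (height_univ_subtype q hq0).symm)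
    exact flat_height_comap_le q
  have hZ' : ∃ C', IsClosed C' ∧ φ ⁻¹' (Set.univ ∩ Cs) = Set.univ ∩ C' :=
    ⟨φ ⁻¹' Cs, hCs.preimage hφc, by simp⟩
  have hconn := h _ hZ' hcod
  have hpre : Set.univ \ φ ⁻¹' (Set.univ ∩ Cs) = φ ⁻¹' (Set.univ \ (Set.univ ∩ Cs)) := by
    ext x
    simp
  have himage : φ '' (Set.univ \ φ ⁻¹' (Set.univ ∩ Cs)) = Set.univ \ (Set.univ ∩ Cs) := by
    rw [hpre, Set.image_preimage_eq _ hsurj]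
  rw [← himage]
  exact hconn.image φ hφc.continuousOn


end Statements
end Defs
end
end
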